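/- arXiv:2005.01023 — 11 statements merged into one kernel-verified Lean document; each statement's English description precedes it below -/
import Mathlib

section
/- Let p, q ∈ (0, ∞] with p < q, p < ∞ and 1 ≤ q. Then the set of elements f of the Banach space ℓ^q whose underlying sequence belongs to ℓ^p is an F_σ meager subset of ℓ^q; that is, it is equal to the union of a countable family of subsets of ℓ^q, each of which is closed in ℓ^q and has empty interior in ℓ^q. -/
/-!
For `f ∈ ℓ^q`, membership in `ℓ^p` means that the partial sums `∑_{n ∈ s} ‖f n‖ ^ p` are
bounded; the sets where they are bounded by `m` are closed, since each partial sum depends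
continuously on finitely many coordinates. Their union `ℓ^p ∩ ℓ^q` is a linear subspace of `ℓ^q`
(also for `p < 1`, by the quasi-triangle inequality), and a subspace with nonempty interior is
the whole space. It is not, since `n ↦ n ^ (-1/p)` lies in `ℓ^q` but not in `ℓ^p`.
-/

open scoped ENNReal

namespace lp

variable {α : Type*}

section RpowSumLe

variable {E : α → Type*} [∀ i, NormedAddCommGroup (E i)]

variable (E) in
def rpowSumLe (q : ℝ≥0∞) (r C : ℝ) : Set (lp E q) :=
  {f | ∀ s : Finset α, ∑ i ∈ s, ‖f i‖ ^ r ≤ C}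

theorem isClosed_rpowSumLe {q : ℝ≥0∞} [Fact (1 ≤ q)] {r : ℝ} (hr : 0 ≤ r) (C : ℝ) :
    IsClosed (rpowSumLe E q r C) := by
  simp only [rpowSumLe, Set.ofPred_forall]
  refine isClosed_iInter fun s => isClosed_le ?_ continuous_const
  exact continuous_finsetSum _ fun i _ =>
    (lipschitzWith_one_eval q i).continuous.norm.rpow_const fun _ => Or.inr hr

theorem iUnion_rpowSumLe (q : ℝ≥0∞) (r : ℝ) :
    ⋃ m : ℕ, rpowSumLe E q r m = {f | Summable fun i => ‖f i‖ ^ r} := by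
  ext f
  simp only [rpowSumLe, Set.mem_iUnion, Set.mem_ofPred_eq]
  refine ⟨fun ⟨m, hm⟩ => summable_of_sum_le (fun i => by positivity) hm, fun hf => ?_⟩
  exact ⟨⌈∑' i, ‖f i‖ ^ r⌉₊, fun s =>
    (hf.sum_le_tsum s fun i _ => by positivity).trans (Nat.le_ceil _)⟩

theorem rpowSumLe_subset_memℓp (q : ℝ≥0∞) {r : ℝ} (hr : 0 ≤ r) (C : ℝ) :
    rpowSumLe E q r C ⊆ {f | Memℓp f (ENNReal.ofReal r)} := fun _ hf =>
  memℓp_gen' (C := C) fun s => by simpa only [ENNReal.toReal_ofReal hr] using hf s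

end RpowSumLe

section Submodule

variable (𝕜 : Type*) {E : α → Type*} [∀ i, NormedAddCommGroup (E i)]

variable (E) in
def memℓpSubmodule [NormedField 𝕜] [∀ i, NormedSpace 𝕜 (E i)] (q p : ℝ≥0∞) :
    Submodule 𝕜 (lp E q) where
  carrier := {f | Memℓp f p}
  add_mem' := Memℓp.add
  zero_mem' := zero_memℓp
  smul_mem' c _ hf := hf.const_smul c

theorem interior_memℓpSubmodule_eq_empty [NontriviallyNormedField 𝕜]
    [∀ i, NormedSpace 𝕜 (E i)] {q p : ℝ≥0∞} [Fact (1 ≤ q)] (h : ∃ f : lp E q, ¬ Memℓp f p) :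
    interior (memℓpSubmodule 𝕜 E q p : Set (lp E q)) = ∅ := by
  obtain ⟨f, hf⟩ := h
  refine Set.not_nonempty_iff_eq_empty.1 fun hne => hf ?_
  exact Submodule.eq_top_iff'.1 ((memℓpSubmodule 𝕜 E q p).eq_top_of_nonempty_interior' hne) f

end Submodule

end lp

theorem norm_natCast_rpow_smul_rpow {E : Type*} [NormedAddCommGroup E] [NormedSpace ℝ E]
    (e : E) (n : ℕ) (a b : ℝ) :
    ‖(n : ℝ) ^ a • e‖ ^ b = (n : ℝ) ^ (a * b) * ‖e‖ ^ b := by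
  rw [norm_smul, Real.norm_of_nonneg (by positivity), Real.mul_rpow (by positivity) (by positivity),
    ← Real.rpow_mul n.cast_nonneg]

theorem exists_memℓp_not_memℓp (E : Type*) [NormedAddCommGroup E] [NormedSpace ℝ E]
    [Nontrivial E] {p q : ℝ≥0∞} (hp : 0 < p) (hpq : p < q) :
    ∃ f : ℕ → E, Memℓp f q ∧ ¬ Memℓp f p := by
  obtain ⟨e, he⟩ := exists_ne (0 : E)
  have hp' : 0 < p.toReal := ENNReal.toReal_pos hp.ne' hpq.ne_top
  obtain ⟨r, hr, hpr, hrq⟩ := ENNReal.lt_iff_exists_real_btwn.1 hpq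
  have hpr' : p.toReal < r := by
    rwa [← ENNReal.ofReal_lt_ofReal_iff_of_nonneg ENNReal.toReal_nonneg,
      ENNReal.ofReal_toReal hpq.ne_top]
  refine ⟨fun n => (n : ℝ) ^ (-p.toReal⁻¹) • e, (memℓp_gen ?_).of_exponent_ge hrq.le, ?_⟩
  · simp only [ENNReal.toReal_ofReal hr, norm_natCast_rpow_smul_rpow]
    refine (Real.summable_nat_rpow.2 ?_).mul_right _
    rw [neg_mul, neg_lt_neg_iff, inv_mul_eq_div, one_lt_div hp']
    exact hpr'
  · rw [memℓp_gen_iff hp']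
    simp only [norm_natCast_rpow_smul_rpow, neg_mul, inv_mul_cancel₀ hp'.ne',
      summable_mul_right_iff (Real.rpow_pos_of_pos (norm_pos_iff.2 he) _).ne',
      Real.summable_nat_rpow, lt_irrefl, not_false_eq_true]

/-- Let `p, q ∈ (0, ∞]` with `p < q`, `p < ∞` and `1 ≤ q`. The set of
elements of the Banach space `ℓ^q` whose underlying sequence belongs to `ℓ^p` is an
`F_σ` meager subset of `ℓ^q`: it is the union of a countable family of subsets of `ℓ^q`,
each closed with empty interior in `ℓ^q`. -/
theorem ellP_in_ellQ_Fsigma_meager (p : ℝ) (q : ℝ≥0∞) [Fact (1 ≤ q)]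
    (hp : 0 < p) (hpq : ENNReal.ofReal p < q) :
    ∃ S : ℕ → Set (lp (fun _ : ℕ => ℂ) q),
      (∀ n, IsClosed (S n) ∧ interior (S n) = ∅) ∧
      {f : lp (fun _ : ℕ => ℂ) q | Summable fun n : ℕ => ‖(f : ∀ _ : ℕ, ℂ) n‖ ^ p}
        = ⋃ n, S n := by
  obtain ⟨f, hfq, hfp⟩ := exists_memℓp_not_memℓp ℂ (ENNReal.ofReal_pos.2 hp) hpq
  have hint := lp.interior_memℓpSubmodule_eq_empty ℂ ⟨⟨f, hfq⟩, hfp⟩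
  refine ⟨fun m => lp.rpowSumLe _ q p m, fun m => ⟨lp.isClosed_rpowSumLe hp.le m, ?_⟩,
    (lp.iUnion_rpowSumLe q p).symm⟩
  exact Set.subset_eq_empty (interior_mono (lp.rpowSumLe_subset_memℓp q hp.le m)) hint
end

section
/- Let a ∈ [0, ∞) and q ∈ [1, ∞] with a < q. Then the set of elements f of the Banach space ℓ^q whose underlying sequence belongs to ℓ^p for every real p with a < p < ∞ (i.e. f ∈ ⋂_{p>a} ℓ^p) is a meager subset of ℓ^q. -/
/-!
Fix `p` with `a < p` and `p < q`. The set lies in the union over `k` of the closed sets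
`S k = {f | ∑ ‖f n‖ ^ p ≤ k}`. Each `S k` has empty interior: adding to `f` a perturbation of
size `δ` on `N` coordinates costs `N ^ (1/q) * δ` in `ℓ^q` but lifts the `p`-sum of those
coordinates to at least `N * δ ^ p`. With `δ = ε N ^ (-1/q) / 2` the first is `ε / 2` while the
second is `(ε / 2) ^ p * N ^ (1 - p/q)`, unbounded in `N` because `p < q`.
-/

open scoped ENNReal
open Filter Finset

theorem exists_norm_eq_le_norm_add {E : Type*} [NormedAddCommGroup E] [NormedSpace ℝ E]
    [Nontrivial E] (z : E) {δ : ℝ} (hδ : 0 ≤ δ) : ∃ w : E, ‖w‖ = δ ∧ δ ≤ ‖z + w‖ := by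
  obtain ⟨u, hu⟩ := exists_norm_eq E hδ
  -- `z + u` and `z - u` are `2 * δ` apart, so one of them has norm at least `δ`.
  by_contra! h
  have hplus := h u hu
  have hminus := h (-u) (by rw [norm_neg, hu])
  have htwo : ‖(z + u) - (z + -u)‖ = 2 * δ := by
    rw [show (z + u) - (z + -u) = (2 : ℝ) • u by module, norm_smul, hu, Real.norm_two]
  linarith [norm_sub_le (z + u) (z + -u)]

theorem exists_nat_rpow_mul_lt_and_lt_nat_mul_rpow {p r ε : ℝ} (hpr : p * r < 1)
    (hε : 0 < ε) (k : ℝ) :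
    ∃ (N : ℕ) (δ : ℝ), 0 < δ ∧ (N : ℝ) ^ r * δ < ε ∧ k < N * δ ^ p := by
  set c := ε / 2
  have hlim : Tendsto (fun N : ℕ => c ^ p * (N : ℝ) ^ (1 - p * r)) atTop atTop :=
    ((tendsto_rpow_atTop (by linarith)).comp tendsto_natCast_atTop_atTop).const_mul_atTop
      (by positivity)
  obtain ⟨N, hkN, hN⟩ := ((hlim.eventually_gt_atTop k).and (eventually_gt_atTop 0)).exists
  have hN' : (0 : ℝ) < N := by exact_mod_cast hN
  refine ⟨N, c * (N : ℝ) ^ (-r), by positivity, ?_, hkN.trans_eq ?_⟩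
  · rw [mul_left_comm, ← Real.rpow_add hN', add_neg_cancel, Real.rpow_zero, mul_one]
    exact half_lt_self hε
  · rw [Real.mul_rpow (by positivity) (by positivity), ← Real.rpow_mul hN'.le, sub_eq_add_neg,
      Real.rpow_add hN', Real.rpow_one]
    ring_nf

theorem lp.norm_le_card_rpow_mul {ι : Type*} {E : ι → Type*} [∀ i, NormedAddCommGroup (E i)]
    {q : ℝ≥0∞} [Fact (1 ≤ q)] (h : lp E q) (s : Finset ι) {δ : ℝ} (hδ : 0 ≤ δ)
    (hbd : ∀ i, ‖h i‖ ≤ δ) (hs : ∀ i ∉ s, h i = 0) :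
    ‖h‖ ≤ (#s : ℝ) ^ q⁻¹.toReal * δ := by
  rcases eq_or_ne q ⊤ with rfl | hq
  · simpa using lp.norm_le_of_forall_le hδ hbd
  have hq0 : 0 < q.toReal :=
    ENNReal.toReal_pos (zero_lt_one.trans_le (Fact.out : 1 ≤ q)).ne' hq
  refine lp.norm_le_of_tsum_le hq0 (by positivity) ?_
  rw [tsum_eq_sum fun i hi => by simp [hs i hi, Real.zero_rpow hq0.ne'],
    Real.mul_rpow (by positivity) hδ, ← Real.rpow_mul (by positivity), ENNReal.toReal_inv,
    inv_mul_cancel₀ hq0.ne', Real.rpow_one]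
  calc ∑ i ∈ s, ‖h i‖ ^ q.toReal ≤ ∑ _i ∈ s, δ ^ q.toReal :=
        sum_le_sum fun i _ => Real.rpow_le_rpow (norm_nonneg _) (hbd i) hq0.le
    _ = #s * δ ^ q.toReal := by simp

theorem lp.exists_norm_le_and_le_norm_add {ι E : Type*} [NormedAddCommGroup E] [NormedSpace ℝ E]
    [Nontrivial E] {q : ℝ≥0∞} [Fact (1 ≤ q)] (f : lp (fun _ : ι => E) q) (s : Finset ι)
    {δ : ℝ} (hδ : 0 ≤ δ) :
    ∃ h : lp (fun _ : ι => E) q, ‖h‖ ≤ (#s : ℝ) ^ q⁻¹.toReal * δ ∧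
      ∀ i ∈ s, δ ≤ ‖f i + h i‖ := by
  classical
  choose w hw_norm hw_le using fun z : E => exists_norm_eq_le_norm_add z hδ
  let h : ι → E := fun i => if i ∈ s then w (f i) else 0
  have hmem : Memℓp h q := by
    refine (memℓp_zero (s.finite_toSet.subset fun i hi => ?_)).of_exponent_ge zero_le
    by_contra hi'
    exact hi (if_neg hi')
  refine ⟨⟨h, hmem⟩, lp.norm_le_card_rpow_mul _ s hδ (fun i => ?_) (fun i hi => if_neg hi),
    fun i hi => ?_⟩
  · by_cases hi : i ∈ s <;> simp [h, hi, hw_norm, hδ]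
  · simpa [h, hi] using hw_le (f i)

def rpowSumSublevel (ι E : Type*) [NormedAddCommGroup E] (q : ℝ≥0∞) (p k : ℝ) :
    Set (lp (fun _ : ι => E) q) :=
  {f | ∀ s : Finset ι, ∑ i ∈ s, ‖f i‖ ^ p ≤ k}

section rpowSumSublevel

variable {ι E : Type*} [NormedAddCommGroup E] {q : ℝ≥0∞} {p : ℝ}

theorem isClosed_rpowSumSublevel [Fact (1 ≤ q)] (hp : 0 ≤ p) (k : ℝ) :
    IsClosed (rpowSumSublevel ι E q p k) := by
  have hcoord (i : ι) : Continuous fun f : lp (fun _ : ι => E) q => f i :=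
    (continuous_apply i).comp lp.uniformContinuous_coe.continuous
  simp only [rpowSumSublevel, Set.ofPred_forall]
  exact isClosed_iInter fun s => isClosed_le
    (continuous_finsetSum s fun i _ => (hcoord i).norm.rpow_const fun _ => Or.inr hp)
    continuous_const

theorem interior_rpowSumSublevel [Infinite ι] [NormedSpace ℝ E] [Nontrivial E] [Fact (1 ≤ q)]
    (hp : 0 ≤ p) (hpq : ENNReal.ofReal p < q) (k : ℝ) :
    interior (rpowSumSublevel ι E q p k) = ∅ := by
  have hpq' : p * q⁻¹.toReal < 1 := by
    rcases eq_or_ne q ⊤ with rfl | hq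
    · simp
    have hq0 : 0 < q.toReal :=
      ENNReal.toReal_pos (zero_lt_one.trans_le (Fact.out : 1 ≤ q)).ne' hq
    rw [ENNReal.toReal_inv, ← div_eq_mul_inv, div_lt_one hq0]
    exact (ENNReal.ofReal_lt_iff_lt_toReal hp hq).1 hpq
  rw [interior_eq_empty_iff_dense_compl, Metric.dense_iff]
  intro f ε hε
  obtain ⟨N, δ, hδ, hsmall, hlarge⟩ := exists_nat_rpow_mul_lt_and_lt_nat_mul_rpow hpq' hε k
  obtain ⟨s, rfl⟩ := Infinite.exists_subset_card_eq ι N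
  obtain ⟨h, hh, hfh⟩ := lp.exists_norm_le_and_le_norm_add f s hδ.le
  refine ⟨f + h, by simpa [dist_eq_norm] using hh.trans_lt hsmall, fun hmem => ?_⟩
  have hsum : #s * δ ^ p ≤ ∑ i ∈ s, ‖(f + h) i‖ ^ p := by
    simpa using sum_le_sum fun i hi => Real.rpow_le_rpow hδ.le (hfh i hi) hp
  linarith [hmem s]

theorem mem_iUnion_rpowSumSublevel_of_summable {f : lp (fun _ : ι => E) q}
    (hf : Summable fun i => ‖f i‖ ^ p) : f ∈ ⋃ n : ℕ, rpowSumSublevel ι E q p n :=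
  Set.mem_iUnion.2 ⟨⌈∑' i, ‖f i‖ ^ p⌉₊, fun s =>
    (hf.sum_le_tsum s fun _ _ => Real.rpow_nonneg (norm_nonneg _) _).trans (Nat.le_ceil _)⟩

end rpowSumSublevel

theorem inter_ellP_meager_in_ellQ_general (a : ℝ) (q : ℝ≥0∞) [Fact (1 ≤ q)]
    (haq : ENNReal.ofReal a < q) :
    ∃ S : ℕ → Set (lp (fun _ : ℕ => ℂ) q),
      (∀ n, IsClosed (S n) ∧ interior (S n) = ∅) ∧
      {f : lp (fun _ : ℕ => ℂ) q |
          ∀ p : ℝ, a < p → Summable fun n : ℕ => ‖(f : ∀ _ : ℕ, ℂ) n‖ ^ p}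
        ⊆ ⋃ n, S n := by
  obtain ⟨p, -, hap_ofReal, hpq⟩ := ENNReal.lt_iff_exists_real_btwn.1 haq
  obtain ⟨hap, hp⟩ := ENNReal.ofReal_lt_ofReal_iff'.1 hap_ofReal
  refine ⟨fun n => rpowSumSublevel ℕ ℂ q p n,
    fun n => ⟨isClosed_rpowSumSublevel hp.le n, interior_rpowSumSublevel hp.le hpq n⟩,
    fun f hf => mem_iUnion_rpowSumSublevel_of_summable (hf p hap)⟩

/-- Let `a ∈ [0, ∞)` and `q ∈ [1, ∞]` with `a < q`. The set of elements
of the Banach space `ℓ^q` whose underlying sequence belongs to `ℓ^p` for every real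
`p > a` is a meager subset of `ℓ^q`: it is contained in a countable union of closed sets
with empty interior. -/
theorem inter_ellP_meager_in_ellQ (a : ℝ) (q : ℝ≥0∞) [Fact (1 ≤ q)]
    (ha : 0 ≤ a) (haq : ENNReal.ofReal a < q) :
    ∃ S : ℕ → Set (lp (fun _ : ℕ => ℂ) q),
      (∀ n, IsClosed (S n) ∧ interior (S n) = ∅) ∧
      {f : lp (fun _ : ℕ => ℂ) q |
          ∀ p : ℝ, a < p → Summable fun n : ℕ => ‖(f : ∀ _ : ℕ, ℂ) n‖ ^ p}
        ⊆ ⋃ n, S n :=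
  inter_ellP_meager_in_ellQ_general a q haq
end

section
/- Let p, q be real numbers with 0 < p < q < ∞ and 1 ≤ q. Then there exists a ℂ-linear subspace F of the Banach space ℓ^q such that F is dense in ℓ^q and every nonzero element f of F does not belong to ℓ^p, i.e. ∑_{n} |f(n)|^p = ∞. -/
/-!
Let `v n = n ^ (-1/p)`; it lies in `ℓ^q` but not in `ℓ^p` because `q > p`. Split `ℕ` into
infinitely many infinite blocks indexed by pairs `(k, m)`, let `w_{k,m}` be a copy of `v` on
block `(k, m)`, and span `F` by the vectors `e_k + (m + 1)⁻¹ w_{k,m}`. These tend to `e_k` as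
`m → ∞`, so `F` is dense. A unit vector meets each block in at most one point, so a finite
combination with a nonzero coefficient at `(k, m)` agrees, on block `(k, m)` and off finitely
many indices, with a nonzero multiple of `v`; hence it is not in `ℓ^p`.
-/

open scoped ENNReal Topology
open Filter Function

noncomputable section

section ExtendZero

variable {α β E : Type*} [NormedAddCommGroup E] {g : α → β} {p : ℝ≥0∞}

theorem norm_extend_zero_rpow (f : α → E) {r : ℝ} (hr : r ≠ 0) :
    (fun b => ‖extend g f 0 b‖ ^ r) = extend g (fun a => ‖f a‖ ^ r) 0 := by
  funext b
  rw [apply_extend (fun x : E => ‖x‖ ^ r)]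
  congr 1
  funext b
  simp [Real.zero_rpow hr]

theorem Memℓp.extend_zero (hg : Injective g) (hp : 0 < p.toReal) {f : α → E}
    (hf : Memℓp f p) : Memℓp (extend g f 0) p := by
  rw [memℓp_gen_iff hp] at hf ⊢
  rw [norm_extend_zero_rpow f hp.ne']
  exact (summable_extend_zero hg).2 hf

namespace lp

def extendZero (hg : Injective g) (hp : 0 < p.toReal) (f : lp (fun _ : α => E) p) :
    lp (fun _ : β => E) p :=
  ⟨extend g f 0, (lp.memℓp f).extend_zero hg hp⟩

@[simp]
theorem coeFn_extendZero (hg : Injective g) (hp : 0 < p.toReal)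
    (f : lp (fun _ : α => E) p) :
    ⇑(extendZero hg hp f) = extend g f 0 :=
  rfl

theorem norm_extendZero (hg : Injective g) (hp : 0 < p.toReal)
    (f : lp (fun _ : α => E) p) :
    ‖extendZero hg hp f‖ = ‖f‖ := by
  rw [← Real.rpow_left_inj (lp.norm_nonneg' _) (lp.norm_nonneg' _) hp.ne']
  simp only [lp.norm_rpow_eq_tsum hp, coeFn_extendZero,
    norm_extend_zero_rpow (g := g) _ hp.ne', tsum_extend_zero hg]

end lp

end ExtendZero

theorem lp.dense_of_single_mem_topologicalClosure {ι 𝕜 : Type*} [DecidableEq ι]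
    [NormedField 𝕜] {p : ℝ≥0∞} [Fact (1 ≤ p)] (hp : p ≠ ⊤)
    (F : Submodule 𝕜 (lp (fun _ : ι => 𝕜) p))
    (hF : ∀ i, lp.single p i (1 : 𝕜) ∈ F.topologicalClosure) :
    Dense (F : Set (lp (fun _ : ι => 𝕜) p)) := by
  rw [Submodule.dense_iff_topologicalClosure_eq_top, eq_top_iff]
  intro f _
  refine F.isClosed_topologicalClosure.mem_of_tendsto (lp.hasSum_single hp f)
    (Eventually.of_forall fun s => F.topologicalClosure.sum_mem fun i _ => ?_)
  rw [← mul_one (f i), ← smul_eq_mul, lp.single_smul]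
  exact F.topologicalClosure.smul_mem _ (hF i)

theorem not_summable_norm_rpow_of_eventually_eq_mul {ι κ 𝕜 : Type*} [NormedField 𝕜]
    {p : ℝ} {f : ι → 𝕜} {g : κ → ι} (hg : Injective g) {c : 𝕜} (hc : c ≠ 0) {v : κ → 𝕜}
    (hv : ¬Summable fun n => ‖v n‖ ^ p) (hfv : ∀ᶠ n in cofinite, f (g n) = c * v n) :
    ¬Summable fun i => ‖f i‖ ^ p := by
  intro hf
  have hc' : ‖c‖ ^ p ≠ 0 := (Real.rpow_pos_of_pos (norm_pos_iff.2 hc) p).ne'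
  refine hv ((summable_mul_left_iff hc').1 ((hf.comp_injective hg).congr_cofinite ?_))
  filter_upwards [hfv] with n hn
  simp [hn, Real.mul_rpow (norm_nonneg c) (norm_nonneg (v n))]

theorem summable_nat_rpow_neg_inv_rpow {p q : ℝ} (hp : 0 < p) (hpq : p < q) :
    Summable fun n : ℕ => ((n : ℝ) ^ (-p⁻¹)) ^ q := by
  have hexp : -p⁻¹ * q < -1 := by
    rw [neg_mul, neg_lt_neg_iff, ← div_eq_inv_mul, one_lt_div hp]
    exact hpq
  simpa [← Real.rpow_mul (Nat.cast_nonneg _)] using Real.summable_nat_rpow.2 hexp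

theorem not_summable_nat_rpow_neg_inv_rpow {p : ℝ} (hp : p ≠ 0) :
    ¬Summable fun n : ℕ => ((n : ℝ) ^ (-p⁻¹)) ^ p := by
  simp only [← Real.rpow_mul (Nat.cast_nonneg _), neg_mul, inv_mul_cancel₀ hp,
    Real.rpow_neg_one]
  exact Real.not_summable_natCast_inv

def blockPos (i : ℕ × ℕ) (n : ℕ) : ℕ := Encodable.encode (i, n)

theorem blockPos_injective (i : ℕ × ℕ) : Injective (blockPos i) :=
  Encodable.encode_injective.comp (Prod.mk_right_injective i)

theorem extend_blockPos_apply {γ : Type*} [Zero γ] (v : ℕ → γ) (i j : ℕ × ℕ) (n : ℕ) :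
    extend (blockPos i) v (0 : ℕ → γ) (blockPos j n) = if i = j then v n else 0 := by
  split_ifs with h
  · subst h
    exact (blockPos_injective i).extend_apply v 0 n
  · refine extend_apply' v (0 : ℕ → γ) _ fun ⟨m, hm⟩ => h ?_
    exact congrArg Prod.fst (Encodable.encode_injective hm)

section PerturbedSingle

variable (𝕜 : Type*) [RCLike 𝕜]

def rpowNegInv (p : ℝ) (n : ℕ) : 𝕜 := ((n : ℝ) ^ (-p⁻¹) : ℝ)

variable {p q : ℝ}

theorem norm_rpowNegInv (n : ℕ) : ‖rpowNegInv 𝕜 p n‖ = (n : ℝ) ^ (-p⁻¹) :=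
  RCLike.norm_of_nonneg (Real.rpow_nonneg (Nat.cast_nonneg _) _)

theorem memℓp_rpowNegInv (hp : 0 < p) (hpq : p < q) :
    Memℓp (rpowNegInv 𝕜 p) (ENNReal.ofReal q) := by
  refine memℓp_gen ?_
  simpa [norm_rpowNegInv, ENNReal.toReal_ofReal (hp.trans hpq).le] using
    summable_nat_rpow_neg_inv_rpow hp hpq

theorem not_summable_norm_rpowNegInv_rpow (hp : p ≠ 0) :
    ¬Summable fun n => ‖rpowNegInv 𝕜 p n‖ ^ p := by
  simpa [norm_rpowNegInv] using not_summable_nat_rpow_neg_inv_rpow hp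

variable (hp : 0 < p) (hpq : p < q)

def rpowNegInvBlock (i : ℕ × ℕ) : lp (fun _ : ℕ => 𝕜) (ENNReal.ofReal q) :=
  lp.extendZero (blockPos_injective i)
    (ENNReal.toReal_pos (ENNReal.ofReal_pos.2 (hp.trans hpq)).ne' ENNReal.ofReal_ne_top)
    ⟨rpowNegInv 𝕜 p, memℓp_rpowNegInv 𝕜 hp hpq⟩

theorem rpowNegInvBlock_apply_blockPos (i j : ℕ × ℕ) (n : ℕ) :
    rpowNegInvBlock 𝕜 hp hpq i (blockPos j n) = if i = j then rpowNegInv 𝕜 p n else 0 :=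
  extend_blockPos_apply _ i j n

def perturbedSingle (i : ℕ × ℕ) : lp (fun _ : ℕ => 𝕜) (ENNReal.ofReal q) :=
  lp.single _ i.1 1 + ((i.2 : 𝕜) + 1)⁻¹ • rpowNegInvBlock 𝕜 hp hpq i

def perturbedSpan : Submodule 𝕜 (lp (fun _ : ℕ => 𝕜) (ENNReal.ofReal q)) :=
  Submodule.span 𝕜 (Set.range (perturbedSingle 𝕜 hp hpq))

theorem eventually_perturbedSingle_apply_blockPos (i j : ℕ × ℕ) :
    ∀ᶠ n in cofinite, perturbedSingle 𝕜 hp hpq i (blockPos j n) =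
      if i = j then ((i.2 : 𝕜) + 1)⁻¹ * rpowNegInv 𝕜 p n else 0 := by
  filter_upwards [(blockPos_injective j).tendsto_cofinite.eventually (eventually_cofinite_ne i.1)]
    with n hn
  simp only [perturbedSingle, lp.coeFn_add, lp.coeFn_smul, Pi.add_apply, Pi.smul_apply,
    lp.single_apply_ne _ _ _ hn, rpowNegInvBlock_apply_blockPos, zero_add, smul_eq_mul, mul_ite,
    mul_zero]

theorem not_summable_norm_rpow_of_mem_perturbedSpan
    {f : lp (fun _ : ℕ => 𝕜) (ENNReal.ofReal q)} (hf : f ∈ perturbedSpan 𝕜 hp hpq)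
    (hf0 : f ≠ 0) :
    ¬Summable fun n => ‖f n‖ ^ p := by
  obtain ⟨c, rfl⟩ := Finsupp.mem_span_range_iff_exists_finsupp.1 hf
  obtain ⟨j, hj⟩ : ∃ j, c j ≠ 0 := by
    by_contra! h
    exact hf0 (by simp [show c = 0 from Finsupp.ext h])
  refine not_summable_norm_rpow_of_eventually_eq_mul (blockPos_injective j)
    (mul_ne_zero hj (inv_ne_zero (Nat.cast_add_one_ne_zero j.2)))
    (not_summable_norm_rpowNegInv_rpow 𝕜 hp.ne') ?_
  filter_upwards [(eventually_all_finset c.support).2 fun i _ =>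
    eventually_perturbedSingle_apply_blockPos 𝕜 hp hpq i j] with n hn
  calc (c.sum fun i a => a • perturbedSingle 𝕜 hp hpq i) (blockPos j n)
      = ∑ i ∈ c.support, c i * perturbedSingle 𝕜 hp hpq i (blockPos j n) := by
        simp only [Finsupp.sum, lp.coeFn_sum, Finset.sum_apply, lp.coeFn_smul, Pi.smul_apply,
          smul_eq_mul]
    _ = ∑ i ∈ c.support,
          c i * if i = j then ((i.2 : 𝕜) + 1)⁻¹ * rpowNegInv 𝕜 p n else 0 :=
        Finset.sum_congr rfl fun i hi => by rw [hn i hi]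
    _ = _ := by simp [Finsupp.mem_support_iff.2 hj, mul_assoc]

variable [Fact (1 ≤ ENNReal.ofReal q)]

theorem tendsto_perturbedSingle (k : ℕ) :
    Tendsto (fun m => perturbedSingle 𝕜 hp hpq (k, m)) atTop (𝓝 (lp.single _ k 1)) := by
  have hinv : Tendsto (fun m : ℕ => ((m : 𝕜) + 1)⁻¹) atTop (𝓝 0) := by
    simpa using (tendsto_add_atTop_iff_nat 1).2 (tendsto_inv_atTop_nhds_zero_nat (𝕜 := 𝕜))
  have hbdd : IsBoundedUnder (· ≤ ·) atTop fun m => ‖rpowNegInvBlock 𝕜 hp hpq (k, m)‖ :=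
    isBoundedUnder_of ⟨_, fun m => (lp.norm_extendZero _ _ _).le⟩
  simpa [perturbedSingle] using tendsto_const_nhds.add (hinv.zero_smul_isBoundedUnder_le hbdd)

theorem dense_perturbedSpan :
    Dense (perturbedSpan 𝕜 hp hpq : Set (lp (fun _ : ℕ => 𝕜) (ENNReal.ofReal q))) := by
  refine lp.dense_of_single_mem_topologicalClosure ENNReal.ofReal_ne_top _ fun k => ?_
  refine (perturbedSpan 𝕜 hp hpq).isClosed_topologicalClosure.mem_of_tendsto
    (tendsto_perturbedSingle 𝕜 hp hpq k) (Eventually.of_forall fun m => ?_)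
  exact Submodule.le_topologicalClosure _ (Submodule.subset_span ⟨_, rfl⟩)

end PerturbedSingle

end

theorem algebraic_genericity_ellQ_ellP_general (p q : ℝ) (hp : 0 < p) (hpq : p < q)
    [Fact (1 ≤ ENNReal.ofReal q)] :
    ∃ F : Submodule ℂ (lp (fun _ : ℕ => ℂ) (ENNReal.ofReal q)),
      Dense (F : Set (lp (fun _ : ℕ => ℂ) (ENNReal.ofReal q))) ∧
      ∀ f ∈ F, f ≠ 0 → ¬ Summable fun n : ℕ => ‖(f : ∀ _ : ℕ, ℂ) n‖ ^ p :=
  ⟨perturbedSpan ℂ hp hpq, dense_perturbedSpan ℂ hp hpq,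
    fun _ hf hf0 => not_summable_norm_rpow_of_mem_perturbedSpan ℂ hp hpq hf hf0⟩

/-- Let `0 < p < q < ∞` with `1 ≤ q`. There is a dense `ℂ`-linear
subspace `F` of the Banach space `ℓ^q` every nonzero element of which does not belong
to `ℓ^p`. -/
theorem algebraic_genericity_ellQ_ellP (p q : ℝ) (hp : 0 < p) (hpq : p < q)
    (hq : 1 ≤ q) [Fact (1 ≤ ENNReal.ofReal q)] :
    ∃ F : Submodule ℂ (lp (fun _ : ℕ => ℂ) (ENNReal.ofReal q)),
      Dense (F : Set (lp (fun _ : ℕ => ℂ) (ENNReal.ofReal q))) ∧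
      ∀ f ∈ F, f ≠ 0 → ¬ Summable fun n : ℕ => ‖(f : ∀ _ : ℕ, ℂ) n‖ ^ p :=
  algebraic_genericity_ellQ_ellP_general p q hp hpq
end

section
/- Let 0 < p < ∞. Then there exists a ℂ-linear subspace F of the Banach space c₀ = C₀(ℕ, ℂ) such that F is dense in c₀ and every nonzero element f of F does not belong to ℓ^p, i.e. ∑_{n} |f(n)|^p = ∞. -/
/-!
Split `ℕ` into the infinite blocks `B k = {Nat.pair k m | m : ℕ}`, let `s k` be the sequence equal
to `(m + 1) ^ (-1 / p)` at `Nat.pair k m` and to `0` off `B k`, and let `(x i)` be a sequence in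
`c₀` that accumulates at every point and such that `x i` vanishes from index `i` on. Then the
vectors `y i = x i + (i + 1)⁻¹ • s i` are dense, since `(i + 1)⁻¹ • s i → 0`. If `K` is the
largest index of a nonzero combination `∑ c i • y i`, the combination coincides on `B K ⊆ [K, ∞)`
with `c K (K + 1)⁻¹ • s K`, whose `p`-th powers form a multiple of the harmonic series.
-/

open scoped ZeroAtInfty

open Filter Topology

theorem Nat.tendsto_ite_unpair_fst_eq {E : Type*} [TopologicalSpace E] [Zero E] {u : ℕ → E}
    (hu : Tendsto u atTop (𝓝 0)) (k : ℕ) :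
    Tendsto (fun n => if (Nat.unpair n).1 = k then u (Nat.unpair n).2 else 0) atTop (𝓝 0) := by
  rw [tendsto_atTop'] at hu ⊢
  intro s hs
  obtain ⟨M, hM⟩ := hu s hs
  refine ⟨Nat.pair k M, fun n hn => ?_⟩
  split_ifs with hk
  · refine hM _ (le_of_not_gt fun hlt => ?_)
    have hn' : Nat.pair k (Nat.unpair n).2 = n := by rw [← hk, Nat.pair_unpair]
    have := Nat.pair_lt_pair_right k hlt
    omega
  · exact mem_of_mem_nhds hs

theorem not_summable_norm_rpow_of_injective {ι E : Type*} [NormedAddCommGroup E]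
    [NormedSpace ℝ E] {p : ℝ} (hp : p ≠ 0) {f : ι → E} {e : ℕ → ι} (he : e.Injective)
    {a : E} (ha : a ≠ 0) (hf : ∀ m, f (e m) = ((m : ℝ) + 1) ^ (-1 / p) • a) :
    ¬Summable fun i => ‖f i‖ ^ p := by
  intro hs
  have hdecay (m : ℕ) : ‖f (e m)‖ ^ p = ((m + 1 : ℕ) : ℝ)⁻¹ * ‖a‖ ^ p := by
    rw [hf, norm_smul, Real.norm_of_nonneg (by positivity), Real.mul_rpow (by positivity)
      (norm_nonneg a), ← Real.rpow_mul (by positivity), div_mul_cancel₀ _ hp, Real.rpow_neg_one]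
    push_cast
    rfl
  have hharmonic : Summable fun m : ℕ => ((m + 1 : ℕ) : ℝ)⁻¹ := by
    refine (summable_mul_right_iff (Real.rpow_pos_of_pos (norm_pos_iff.2 ha) p).ne').1 ?_
    simpa only [Function.comp_def, hdecay] using hs.comp_injective he
  exact Real.not_summable_natCast_inv ((summable_nat_add_iff 1).1 hharmonic)

theorem ZeroAtInftyContinuousMap.coe_finset_sum {α β ι : Type*} [TopologicalSpace α]
    [TopologicalSpace β] [AddCommMonoid β] [ContinuousAdd β] (s : Finset ι)
    (f : ι → C₀(α, β)) :
    ⇑(∑ i ∈ s, f i) = ∑ i ∈ s, ⇑(f i) :=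
  map_sum (⟨⟨(⇑), coe_zero⟩, coe_add⟩ : C₀(α, β) →+ α → β) f s

def ZeroAtInftyContinuousMap.ofTendstoAtTop {E : Type*} [TopologicalSpace E] [Zero E]
    (u : ℕ → E) (hu : Tendsto u atTop (𝓝 0)) : C₀(ℕ, E) where
  toFun := u
  continuous_toFun := continuous_of_discreteTopology
  zero_at_infty' := cocompact_eq_atTop (α := ℕ) ▸ hu

@[simp]
theorem ZeroAtInftyContinuousMap.coe_ofTendstoAtTop {E : Type*} [TopologicalSpace E] [Zero E]
    (u : ℕ → E) (hu : Tendsto u atTop (𝓝 0)) : ⇑(ofTendstoAtTop u hu) = u :=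
  rfl

theorem ZeroAtInftyContinuousMap.dist_le_of_forall {α E : Type*} [TopologicalSpace α]
    [PseudoMetricSpace E] [Zero E] {f g : C₀(α, E)} {C : ℝ} (hC : 0 ≤ C)
    (h : ∀ x, dist (f x) (g x) ≤ C) : dist f g ≤ C := by
  rw [← dist_toBCF_eq_dist]
  exact (BoundedContinuousFunction.dist_le hC).2 h

noncomputable section

namespace AlgebraicGenericity

open ZeroAtInftyContinuousMap

/-- `approx (Nat.pair k j)` runs, as `j` varies, through a dense sequence of the sequences
supported in `[0, k)`. -/
def approxSeq (k j : ℕ) (n : ℕ) : ℂ :=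
  if h : n < k then TopologicalSpace.denseSeq (Fin k → ℂ) j ⟨n, h⟩ else 0

theorem approxSeq_of_le {k n : ℕ} (j : ℕ) (h : k ≤ n) : approxSeq k j n = 0 :=
  dif_neg h.not_gt

def approx (i : ℕ) : C₀(ℕ, ℂ) :=
  ofTendstoAtTop (approxSeq (Nat.unpair i).1 (Nat.unpair i).2) <|
    tendsto_const_nhds.congr' <| (eventually_ge_atTop _).mono fun _ h => (approxSeq_of_le _ h).symm

theorem approx_apply_of_le {i n : ℕ} (h : i ≤ n) : approx i n = 0 :=
  approxSeq_of_le _ ((Nat.unpair_left_le i).trans h)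

theorem frequently_dist_approx_lt (f : C₀(ℕ, ℂ)) {ε : ℝ} (hε : 0 < ε) :
    ∃ᶠ i in atTop, dist (approx i) f < ε := by
  have hf : Tendsto f atTop (𝓝 0) := cocompact_eq_atTop (α := ℕ) ▸ zero_at_infty f
  obtain ⟨N, hN⟩ := eventually_atTop.1
    ((tendsto_zero_iff_norm_tendsto_zero.1 hf).eventually_lt_const (half_pos hε))
  rw [frequently_atTop]
  intro M
  set k := max N M
  obtain ⟨j, hj⟩ := (TopologicalSpace.denseRange_denseSeq (Fin k → ℂ)).exists_dist_lt
    (fun n : Fin k => f n) (half_pos hε)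
  refine ⟨Nat.pair k j, (le_max_right N M).trans (Nat.left_le_pair k j), ?_⟩
  refine (dist_le_of_forall (half_pos hε).le fun n => ?_).trans_lt (half_lt_self hε)
  rw [approx, coe_ofTendstoAtTop, Nat.unpair_pair, approxSeq]
  split_ifs with hn
  · rw [dist_comm] at hj
    exact (dist_le_pi_dist _ (fun n : Fin k => f n) ⟨n, hn⟩).trans hj.le
  · rw [dist_zero_left]
    exact (hN n ((le_max_left N M).trans (le_of_not_gt hn))).le

variable {p : ℝ} (hp : 0 < p)

def spike (k : ℕ) : C₀(ℕ, ℂ) :=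
  ofTendstoAtTop _ <| Nat.tendsto_ite_unpair_fst_eq (k := k)
    (u := fun m => ((((m : ℝ) + 1) ^ (-1 / p) : ℝ) : ℂ)) <| by
    have := (tendsto_rpow_neg_atTop (one_div_pos.2 hp)).comp
      (tendsto_atTop_add_const_right atTop 1 tendsto_natCast_atTop_atTop)
    simpa [neg_div, Function.comp_def] using (Complex.continuous_ofReal.tendsto 0).comp this

theorem spike_apply (k n : ℕ) : spike hp k n =
    if (Nat.unpair n).1 = k then ((((Nat.unpair n).2 + 1 : ℝ) ^ (-1 / p) : ℝ) : ℂ) else 0 :=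
  rfl

theorem norm_spike_le_one (k : ℕ) : ‖spike hp k‖ ≤ 1 := by
  rw [← norm_toBCF_eq_norm, BoundedContinuousFunction.norm_le zero_le_one]
  intro n
  show ‖spike hp k n‖ ≤ 1
  rw [spike_apply]
  split_ifs
  · rw [Complex.norm_real, Real.norm_of_nonneg (by positivity)]
    exact Real.rpow_le_one_of_one_le_of_nonpos (by simp)
      (div_nonpos_of_nonpos_of_nonneg (by norm_num) hp.le)
  · simp

def generator (i : ℕ) : C₀(ℕ, ℂ) := approx i + ((i : ℂ) + 1)⁻¹ • spike hp i

theorem tendsto_smul_spike :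
    Tendsto (fun i : ℕ => ((i : ℂ) + 1)⁻¹ • spike hp i) atTop (𝓝 0) := by
  refine squeeze_zero_norm (fun i => ?_) tendsto_one_div_add_atTop_nhds_zero_nat
  calc ‖((i : ℂ) + 1)⁻¹ • spike hp i‖ ≤ ‖((i : ℂ) + 1)⁻¹‖ * 1 :=
        (norm_smul_le _ _).trans
          (mul_le_mul_of_nonneg_left (norm_spike_le_one hp i) (norm_nonneg _))
    _ = 1 / ((i : ℝ) + 1) := by
        rw [mul_one, norm_inv, one_div, ← Nat.cast_add_one, Complex.norm_natCast,
          Nat.cast_add_one]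

theorem denseRange_generator : DenseRange (generator hp) := by
  intro f
  rw [Metric.mem_closure_range_iff]
  intro ε hε
  obtain ⟨i, happrox, hspike⟩ := ((frequently_dist_approx_lt f (half_pos hε)).and_eventually
    ((tendsto_zero_iff_norm_tendsto_zero.1 (tendsto_smul_spike hp)).eventually_lt_const
      (half_pos hε))).exists
  refine ⟨i, ?_⟩
  calc dist f (generator hp i) ≤ dist f (approx i) + dist (approx i) (generator hp i) :=
        dist_triangle _ _ _
    _ < ε / 2 + ε / 2 := by
        rw [generator, dist_self_add_right, dist_comm]
        exact add_lt_add happrox hspike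
    _ = ε := add_halves ε

theorem sum_smul_generator_apply_pair (c : ℕ →₀ ℂ) {K : ℕ} (hK : ∀ i ∈ c.support, i ≤ K)
    (m : ℕ) :
    (c.sum fun i a => a • generator hp i) (Nat.pair K m) =
      ((m : ℝ) + 1) ^ (-1 / p) • (c K * ((K : ℂ) + 1)⁻¹) := by
  rw [Finsupp.sum, coe_finset_sum, Finset.sum_apply, Finset.sum_eq_single K]
  · simp only [generator, coe_smul, coe_add, Pi.smul_apply, Pi.add_apply, smul_eq_mul,
      approx_apply_of_le (Nat.left_le_pair K m), spike_apply, Nat.unpair_pair, if_true,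
      Complex.real_smul]
    ring
  · intro i hi hiK
    simp [generator, approx_apply_of_le ((hK i hi).trans (Nat.left_le_pair K m)), spike_apply,
      Nat.unpair_pair, Ne.symm hiK]
  · intro hK
    simp [Finsupp.notMem_support_iff.1 hK]

end AlgebraicGenericity

end

open AlgebraicGenericity in
/-- Let `0 < p < ∞`. There is a dense `ℂ`-linear subspace `F` of the
Banach space `c₀ = C₀(ℕ, ℂ)` every nonzero element of which does not belong to `ℓ^p`. -/
theorem algebraic_genericity_czero_ellP (p : ℝ) (hp : 0 < p) :
    ∃ F : Submodule ℂ C₀(ℕ, ℂ),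
      Dense (F : Set C₀(ℕ, ℂ)) ∧
      ∀ f ∈ F, f ≠ 0 → ¬ Summable fun n : ℕ => ‖f n‖ ^ p := by
  refine ⟨Submodule.span ℂ (Set.range (generator hp)),
    (denseRange_generator hp).mono Submodule.subset_span, ?_⟩
  intro f hf hf0
  obtain ⟨c, rfl⟩ := Finsupp.mem_span_range_iff_exists_finsupp.1 hf
  have hc : c.support.Nonempty := Finsupp.support_nonempty_iff.2 (by rintro rfl; simp at hf0)
  set K := c.support.max' hc
  have hcK : c K ≠ 0 := Finsupp.mem_support_iff.1 (c.support.max'_mem hc)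
  exact not_summable_norm_rpow_of_injective hp.ne'
    (StrictMono.injective fun _ _ => Nat.pair_lt_pair_right K)
    (mul_ne_zero hcK (inv_ne_zero (Nat.cast_add_one_ne_zero K)))
    (sum_smul_generator_apply_pair hp c fun i hi => c.support.le_max' i hi)
end

section
/- There exists a ℂ-linear subspace F of the Banach space ℓ^∞ such that F is closed in ℓ^∞, F is infinite dimensional (not finitely generated as a ℂ-module), and every nonzero element f of F does not belong to c₀, i.e. the sequence f does not converge to 0 at infinity. -/
/-!
Precomposition with `n ↦ n.unpair.1`, a surjection `ℕ → ℕ` with infinite fibres, embeds `ℓ^∞`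
isometrically into itself. Its range is closed, being an isometric image of a complete space,
and is infinite-dimensional since `ℓ^∞` is. An element of the range takes each of its values
infinitely often, so it can tend to `0` only if all these values are `0`.
-/

open scoped ENNReal Topology
open Filter Function

namespace lp

variable {α β 𝕜 E : Type*} [NormedRing 𝕜] [NormedAddCommGroup E] [Module 𝕜 E] [IsBoundedSMul 𝕜 E]

theorem _root_.Memℓp.infty_comp {f : β → E} (hf : Memℓp f ∞) (σ : α → β) : Memℓp (f ∘ σ) ∞ := by
  obtain ⟨C, hC⟩ := memℓp_infty_iff.mp hf
  exact memℓp_infty ⟨C, Set.forall_mem_range.mpr fun a => hC ⟨σ a, rfl⟩⟩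

noncomputable def compₗᵢ (σ : α → β) (hσ : Surjective σ) :
    lp (fun _ : β => E) ∞ →ₗᵢ[𝕜] lp (fun _ : α => E) ∞ where
  toFun f := ⟨f ∘ σ, (lp.memℓp f).infty_comp σ⟩
  map_add' _ _ := rfl
  map_smul' _ _ := rfl
  norm_map' f := by
    rw [lp.norm_eq_ciSup, lp.norm_eq_ciSup]
    exact hσ.iSup_comp fun b => ‖f b‖

theorem not_finite_infty (𝕜 : Type*) [NormedField 𝕜] (α : Type*) [Infinite α] :
    ¬ Module.Finite 𝕜 (lp (fun _ : α => 𝕜) ∞) := by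
  have hinj : Injective (linearMapOfLE 𝕜 (fun _ : α => 𝕜) (zero_le : (0 : ℝ≥0∞) ≤ ∞)) :=
    fun _ _ hfg => lp.ext (congrArg (fun h : lp (fun _ : α => 𝕜) ∞ => ⇑h) hfg)
  exact fun _ => Module.not_finite_of_infinite_basis zeroBasis (.of_injective _ hinj)

end lp

theorem eq_of_tendsto_comp_of_infinite_fibers {β X : Type*} [TopologicalSpace X] [T2Space X]
    {σ : ℕ → β} (hσ : ∀ b, {n | σ n = b}.Infinite) {g : β → X} {x : X}
    (h : Tendsto (g ∘ σ) atTop (𝓝 x)) (b : β) : g b = x :=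
  tendsto_nhds_unique_of_frequently_eq tendsto_const_nhds h <|
    Nat.frequently_atTop_iff_infinite.mpr <| (hσ b).mono fun n hn => by simp [hn.symm]

theorem Nat.surjective_unpair_fst : Surjective fun n : ℕ => n.unpair.1 :=
  fun k => ⟨Nat.pair k 0, by simp⟩

theorem Nat.infinite_setOf_unpair_fst_eq (k : ℕ) : {n : ℕ | n.unpair.1 = k}.Infinite :=
  (Set.infinite_range_of_injective (f := Nat.pair k) fun _ _ h => (Nat.pair_eq_pair.mp h).2).mono
    (Set.range_subset_iff.mpr fun m => by simp)

/-- There is a closed, infinite-dimensional (not finitely generated)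
`ℂ`-linear subspace `F` of the Banach space `ℓ^∞` every nonzero element of which does
not tend to `0` at infinity (i.e. does not belong to `c₀`). -/
theorem spaceability_ellInfty_czero :
    ∃ F : Submodule ℂ (lp (fun _ : ℕ => ℂ) ⊤),
      IsClosed (F : Set (lp (fun _ : ℕ => ℂ) ⊤)) ∧
      ¬ F.FG ∧
      ∀ f ∈ F, f ≠ 0 →
        ¬ Tendsto (fun n : ℕ => (f : ∀ _ : ℕ, ℂ) n) atTop (nhds 0) := by
  set T := lp.compₗᵢ (𝕜 := ℂ) (E := ℂ) _ Nat.surjective_unpair_fst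
  refine ⟨LinearMap.range T.toLinearMap, ?_, fun hFG => ?_, ?_⟩
  · rw [LinearMap.coe_range, LinearIsometry.coe_toLinearMap]
    exact T.isometry.isClosedEmbedding.isClosed_range
  · have := Module.Finite.iff_fg.mpr hFG
    exact lp.not_finite_infty ℂ ℕ <|
      .equiv (LinearEquiv.ofInjective T.toLinearMap T.injective).symm
  · rintro _ ⟨g, rfl⟩ hg htend
    refine hg ?_
    simp only [LinearIsometry.coe_toLinearMap, map_eq_zero_iff T T.injective]
    exact lp.ext <| funext <|
      eq_of_tendsto_comp_of_infinite_fibers Nat.infinite_setOf_unpair_fst_eq htend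
end

section
/- Let b be a real number with 0 < b and let q ∈ [1, ∞] with b < q. Then there exists a ℂ-linear subspace F of the Banach space ℓ^q such that F is closed in ℓ^q, F is infinite dimensional (not finitely generated as a ℂ-module), and every nonzero element f of F does not belong to ℓ^b, i.e. ∑_{n} |f(n)|^b = ∞. -/
open scoped ENNReal

noncomputable def gseq (b : ℝ) : ℕ → ℂ :=
  fun n => (((2:ℝ) ^ (-((Nat.unpair n).1 : ℝ)) *
    (((Nat.unpair n).2 : ℝ) + 1) ^ (-1/b) : ℝ) : ℂ)

lemma gseq_norm (b : ℝ) (n : ℕ) :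
    ‖gseq b n‖ = (2:ℝ) ^ (-((Nat.unpair n).1 : ℝ)) *
      (((Nat.unpair n).2 : ℝ) + 1) ^ (-1/b) := by
  have h1 : (0:ℝ) < (2:ℝ) ^ (-((Nat.unpair n).1 : ℝ)) :=
    Real.rpow_pos_of_pos (by norm_num) _
  have h2 : (0:ℝ) < (((Nat.unpair n).2 : ℝ) + 1) ^ (-1/b) :=
    Real.rpow_pos_of_pos (by positivity) _
  rw [gseq, Complex.norm_real, Real.norm_eq_abs, abs_of_pos (by positivity)]

lemma gseq_norm_pos (b : ℝ) (n : ℕ) : 0 < ‖gseq b n‖ := by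
  rw [gseq_norm]
  have h1 : (0:ℝ) < (2:ℝ) ^ (-((Nat.unpair n).1 : ℝ)) :=
    Real.rpow_pos_of_pos (by norm_num) _
  have h2 : (0:ℝ) < (((Nat.unpair n).2 : ℝ) + 1) ^ (-1/b) :=
    Real.rpow_pos_of_pos (by positivity) _
  positivity

lemma gseq_ne_zero (b : ℝ) (n : ℕ) : gseq b n ≠ 0 :=
  fun h => by simpa [h] using gseq_norm_pos b n

lemma gseq_norm_le_one (b : ℝ) (hb : 0 < b) (n : ℕ) : ‖gseq b n‖ ≤ 1 := by
  rw [gseq_norm]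
  have h1 : (2:ℝ) ^ (-((Nat.unpair n).1 : ℝ)) ≤ 1 :=
    Real.rpow_le_one_of_one_le_of_nonpos (by norm_num) (neg_nonpos.2 (Nat.cast_nonneg _))
  have hx1 : (1:ℝ) ≤ ((Nat.unpair n).2 : ℝ) + 1 := by
    have : (0:ℝ) ≤ ((Nat.unpair n).2 : ℝ) := Nat.cast_nonneg _
    linarith
  have hx2 : -1/b ≤ 0 := by
    rw [neg_div, neg_nonpos]
    positivity
  have h2 : (((Nat.unpair n).2 : ℝ) + 1) ^ (-1/b) ≤ 1 :=
    Real.rpow_le_one_of_one_le_of_nonpos hx1 hx2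
  have h1' : (0:ℝ) < (2:ℝ) ^ (-((Nat.unpair n).1 : ℝ)) :=
    Real.rpow_pos_of_pos (by norm_num) _
  have h2' : (0:ℝ) < (((Nat.unpair n).2 : ℝ) + 1) ^ (-1/b) :=
    Real.rpow_pos_of_pos (by positivity) _
  calc (2:ℝ) ^ (-((Nat.unpair n).1 : ℝ)) * (((Nat.unpair n).2 : ℝ) + 1) ^ (-1/b)
      ≤ 1 * 1 := mul_le_mul h1 h2 h2'.le (by norm_num)
    _ = 1 := by norm_num

lemma memℓp_gseq (b : ℝ) (q : ℝ≥0∞) (hb : 0 < b) (hq1 : 1 ≤ q)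
    (hbq : ENNReal.ofReal b < q) : Memℓp (gseq b) q := by
  rcases eq_or_ne q ∞ with rfl | hq
  · exact memℓp_infty ⟨1, by rintro x ⟨n, rfl⟩; exact gseq_norm_le_one b hb n⟩
  · apply memℓp_gen
    set t := q.toReal with ht
    have hbt : b < t := (ENNReal.ofReal_lt_iff_lt_toReal hb.le hq).1 hbq
    have ht0 : 0 < t := hb.trans hbt
    have key : ∀ n : ℕ, ‖gseq b n‖ ^ t =
        (((2:ℝ) ^ (-t)) ^ ((Nat.unpair n).1)) *
          ((((Nat.unpair n).2 : ℝ) + 1) ^ (-(t/b))) := by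
      intro n
      rw [gseq_norm, Real.mul_rpow (by positivity) (by positivity),
        ← Real.rpow_natCast ((2:ℝ) ^ (-t)) ((Nat.unpair n).1),
        ← Real.rpow_mul (by norm_num : (0:ℝ) ≤ 2),
        ← Real.rpow_mul (by norm_num : (0:ℝ) ≤ 2),
        ← Real.rpow_mul (by positivity : (0:ℝ) ≤ ((Nat.unpair n).2 : ℝ) + 1),
        show (-((Nat.unpair n).1:ℝ))*t = (-t)*((Nat.unpair n).1:ℝ) by ring,
        show (-1/b)*t = -(t/b) by ring]
    have hu : Summable (fun k : ℕ => ((2:ℝ) ^ (-t)) ^ k) :=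
      summable_geometric_of_lt_one (by positivity)
        (Real.rpow_lt_one_of_one_lt_of_neg (by norm_num) (by linarith))
    have hv : Summable (fun j : ℕ => (((j : ℝ) + 1) ^ (-(t/b)))) := by
      have h : Summable (fun n : ℕ => ((n : ℝ) ^ (-(t/b)))) := by
        apply Real.summable_nat_rpow.2
        rw [neg_lt_neg_iff]
        rw [lt_div_iff₀ hb]
        linarith
      have := (summable_nat_add_iff 1).2 h
      simpa [Nat.cast_add] using this
    have hprod : Summable (fun p : ℕ × ℕ =>
        (((2:ℝ) ^ (-t)) ^ p.1) * (((p.2 : ℝ) + 1) ^ (-(t/b)))) :=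
      hu.mul_of_nonneg hv (fun k => by positivity) (fun j => by positivity)
    have := (Nat.pairEquiv.summable_iff
      (f := fun n : ℕ => ‖gseq b n‖ ^ t)).1 ?_
    · exact this
    · apply hprod.congr
      intro p
      have hpe : Nat.pairEquiv p = Nat.pair p.1 p.2 := rfl
      simp only [Function.comp, key, hpe, Nat.unpair_pair]

noncomputable def evalCLM (q : ℝ≥0∞) [Fact (1 ≤ q)] (n : ℕ) :
    lp (fun _ : ℕ => ℂ) q →L[ℂ] ℂ :=
  LinearMap.mkContinuous
    { toFun := fun f => f n
      map_add' := fun f g => by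
        have := lp.coeFn_add f g
        exact congrFun this n
      map_smul' := fun c f => by
        have := lp.coeFn_smul c f
        exact congrFun this n }
    1
    (fun f => by
      have hq : q ≠ 0 := by
        have : (1:ℝ≥0∞) ≤ q := Fact.out
        intro h; rw [h] at this; exact (by simp at this)
      simpa using lp.norm_apply_le_norm hq f n)

lemma evalCLM_apply (q : ℝ≥0∞) [Fact (1 ≤ q)] (n : ℕ) (f : lp (fun _ : ℕ => ℂ) q) :
    evalCLM q n f = f n := rfl

/-- The subspace: sequences proportional to `gseq b` on each block. -/
noncomputable def Fsub (b : ℝ) (q : ℝ≥0∞) [Fact (1 ≤ q)] :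
    Submodule ℂ (lp (fun _ : ℕ => ℂ) q) where
  carrier := {f | ∀ n j : ℕ,
    gseq b (Nat.pair (Nat.unpair n).1 j) * f n = gseq b n * f (Nat.pair (Nat.unpair n).1 j)}
  zero_mem' := by
    intro n j
    have h0 : ∀ m : ℕ, (0 : lp (fun _ : ℕ => ℂ) q) m = 0 := fun m =>
      congrFun (lp.coeFn_zero (fun _ : ℕ => ℂ) q) m
    simp [h0]
  add_mem' := by
    intro f g hf hg n j
    have hA := congrFun (lp.coeFn_add f g) n
    have hB := congrFun (lp.coeFn_add f g) (Nat.pair (Nat.unpair n).1 j)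
    simp only [Pi.add_apply] at hA hB
    rw [hA, hB, mul_add, mul_add, hf n j, hg n j]
  smul_mem' := by
    intro c f hf n j
    have hA := congrFun (lp.coeFn_smul c f) n
    have hB := congrFun (lp.coeFn_smul c f) (Nat.pair (Nat.unpair n).1 j)
    simp only [Pi.smul_apply, smul_eq_mul] at hA hB
    rw [hA, hB]
    calc gseq b (Nat.pair (Nat.unpair n).1 j) * (c * f n)
        = c * (gseq b (Nat.pair (Nat.unpair n).1 j) * f n) := by ring
      _ = c * (gseq b n * f (Nat.pair (Nat.unpair n).1 j)) := by rw [hf n j]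
      _ = gseq b n * (c * f (Nat.pair (Nat.unpair n).1 j)) := by ring

lemma Fsub_isClosed (b : ℝ) (q : ℝ≥0∞) [Fact (1 ≤ q)] :
    IsClosed ((Fsub b q : Submodule ℂ (lp (fun _ : ℕ => ℂ) q)) :
      Set (lp (fun _ : ℕ => ℂ) q)) := by
  have : ((Fsub b q : Submodule ℂ (lp (fun _ : ℕ => ℂ) q)) :
      Set (lp (fun _ : ℕ => ℂ) q)) =
      ⋂ (n : ℕ) (j : ℕ), {f : lp (fun _ : ℕ => ℂ) q |
        gseq b (Nat.pair (Nat.unpair n).1 j) * evalCLM q n f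
          = gseq b n * evalCLM q (Nat.pair (Nat.unpair n).1 j) f} := by
    ext f
    simp only [Set.mem_iInter, Set.mem_setOf_eq]
    rfl
  rw [this]
  refine isClosed_iInter fun n => isClosed_iInter fun j => isClosed_eq ?_ ?_
  · exact continuous_const.mul (evalCLM q n).continuous
  · exact continuous_const.mul (evalCLM q (Nat.pair (Nat.unpair n).1 j)).continuous

noncomputable def eseq (b : ℝ) (k : ℕ) : ℕ → ℂ :=
  fun n => if (Nat.unpair n).1 = k then gseq b n else 0

lemma memℓp_eseq (b : ℝ) (q : ℝ≥0∞) (hb : 0 < b) (hq1 : 1 ≤ q)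
    (hbq : ENNReal.ofReal b < q) (k : ℕ) : Memℓp (eseq b k) q := by
  have hg := memℓp_gseq b q hb hq1 hbq
  have hle : ∀ n, ‖eseq b k n‖ ≤ ‖gseq b n‖ := by
    intro n
    by_cases h : (Nat.unpair n).1 = k <;> simp [eseq, h, (gseq_norm_pos b n).le]
  rcases eq_or_ne q ∞ with rfl | hq
  · rw [memℓp_infty_iff] at hg ⊢
    obtain ⟨C, hC⟩ := hg
    refine ⟨C, ?_⟩
    rintro x ⟨n, rfl⟩
    exact le_trans (hle n) (hC ⟨n, rfl⟩)
  · have ht0 : 0 < q.toReal := ENNReal.toReal_pos (by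
      intro h; rw [h] at hq1; exact (by simp at hq1)) hq
    apply memℓp_gen
    refine Summable.of_nonneg_of_le (fun n => by positivity)
      (fun n => Real.rpow_le_rpow (norm_nonneg _) (hle n) ht0.le)
      (hg.summable ht0)

lemma eseq_mem_Fsub (b : ℝ) (q : ℝ≥0∞) [Fact (1 ≤ q)] (hb : 0 < b)
    (hbq : ENNReal.ofReal b < q) (k : ℕ) :
    (⟨eseq b k, memℓp_eseq b q hb Fact.out hbq k⟩ : lp (fun _ : ℕ => ℂ) q) ∈ Fsub b q := by
  intro n j
  show gseq b (Nat.pair (Nat.unpair n).1 j) * eseq b k n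
    = gseq b n * eseq b k (Nat.pair (Nat.unpair n).1 j)
  by_cases h : (Nat.unpair n).1 = k
  · simp [eseq, h, Nat.unpair_pair]
    ring
  · simp [eseq, h, Nat.unpair_pair]

lemma eseq_linearIndependent (b : ℝ) (q : ℝ≥0∞) [Fact (1 ≤ q)] (hb : 0 < b)
    (hbq : ENNReal.ofReal b < q) :
    LinearIndependent ℂ (fun k : ℕ =>
      (⟨eseq b k, memℓp_eseq b q hb Fact.out hbq k⟩ : lp (fun _ : ℕ => ℂ) q)) := by
  rw [linearIndependent_iff']
  intro s c hsum i hi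
  have happ := congrArg (evalCLM q (Nat.pair i 0)) hsum
  rw [map_sum, map_zero] at happ
  have hterm : ∀ k ∈ s, evalCLM q (Nat.pair i 0)
      (c k • (⟨eseq b k, memℓp_eseq b q hb Fact.out hbq k⟩ : lp (fun _ : ℕ => ℂ) q))
      = if k = i then c k * gseq b (Nat.pair i 0) else 0 := by
    intro k _
    rw [map_smul]
    have : evalCLM q (Nat.pair i 0)
        (⟨eseq b k, memℓp_eseq b q hb Fact.out hbq k⟩ : lp (fun _ : ℕ => ℂ) q)
        = eseq b k (Nat.pair i 0) := rfl
    rw [smul_eq_mul, this, eseq, Nat.unpair_pair]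
    by_cases h : k = i
    · simp [h]
    · simp [h, Ne.symm h]
  rw [Finset.sum_congr rfl hterm, Finset.sum_ite_eq' s i (fun k => c k * gseq b (Nat.pair i 0)),
    if_pos hi] at happ
  exact (mul_eq_zero.1 happ).resolve_right (gseq_ne_zero b _)

lemma Fsub_not_fg (b : ℝ) (q : ℝ≥0∞) [Fact (1 ≤ q)] (hb : 0 < b)
    (hbq : ENNReal.ofReal b < q) : ¬ (Fsub b q).FG := by
  intro hFG
  haveI : FiniteDimensional ℂ (Fsub b q) :=
    (Submodule.fg_iff_finiteDimensional _).1 hFG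
  set v : ℕ → (Fsub b q) := fun k =>
    ⟨⟨eseq b k, memℓp_eseq b q hb Fact.out hbq k⟩, eseq_mem_Fsub b q hb hbq k⟩ with hv
  have hli : LinearIndependent ℂ v := by
    apply LinearIndependent.of_comp (Fsub b q).subtype
    exact eseq_linearIndependent b q hb hbq
  exact Module.Finite.not_linearIndependent_of_infinite v hli

/-- Let `0 < b` and `q ∈ [1, ∞]` with `b < q`. There is a closed,
infinite-dimensional (not finitely generated) `ℂ`-linear subspace `F` of the Banach
space `ℓ^q` every nonzero element of which does not belong to `ℓ^b`. -/
theorem spaceability_ellQ_ellB (b : ℝ) (q : ℝ≥0∞) [Fact (1 ≤ q)]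
    (hb : 0 < b) (hbq : ENNReal.ofReal b < q) :
    ∃ F : Submodule ℂ (lp (fun _ : ℕ => ℂ) q),
      IsClosed (F : Set (lp (fun _ : ℕ => ℂ) q)) ∧
      ¬ F.FG ∧
      ∀ f ∈ F, f ≠ 0 → ¬ Summable fun n : ℕ => ‖(f : ∀ _ : ℕ, ℂ) n‖ ^ b := by
  refine ⟨Fsub b q, Fsub_isClosed b q, Fsub_not_fg b q hb hbq, ?_⟩
  intro f hf hf0 hs
  -- find a nonzero coordinate
  have hex : ∃ n₀ : ℕ, (f : ∀ _ : ℕ, ℂ) n₀ ≠ 0 := by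
    by_contra h
    push_neg at h
    exact hf0 (lp.ext (funext fun n => by
      rw [h n]; exact (congrFun (lp.coeFn_zero (fun _ : ℕ => ℂ) q) n).symm))
  obtain ⟨n₀, hn₀⟩ := hex
  set k := (Nat.unpair n₀).1 with hk
  -- on the block of n₀, f is proportional to gseq
  have hprop : ∀ j : ℕ, gseq b (Nat.pair k j) * f n₀ = gseq b n₀ * f (Nat.pair k j) :=
    fun j => hf n₀ j
  have hinj : Function.Injective (fun j : ℕ => Nat.pair k j) := by
    intro j₁ j₂ h
    have := congrArg (fun x => (Nat.unpair x).2) h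
    simpa [Nat.unpair_pair] using this
  have hs2 : Summable fun j : ℕ => ‖(f : ∀ _ : ℕ, ℂ) (Nat.pair k j)‖ ^ b :=
    hs.comp_injective hinj
  set C : ℝ := (‖(f : ∀ _ : ℕ, ℂ) n₀‖ / ‖gseq b n₀‖) ^ b with hC
  have hCpos : 0 < C := by
    apply Real.rpow_pos_of_pos
    exact div_pos (norm_pos_iff.2 hn₀) (gseq_norm_pos b n₀)
  set D : ℝ := ((2:ℝ) ^ (-(k:ℝ))) ^ b with hD
  have hDpos : 0 < D := Real.rpow_pos_of_pos (Real.rpow_pos_of_pos (by norm_num) _) _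
  have hval : ∀ j : ℕ, ‖(f : ∀ _ : ℕ, ℂ) (Nat.pair k j)‖ ^ b
      = D * C * ((j:ℝ) + 1)⁻¹ := by
    intro j
    have h1 : ‖(f : ∀ _ : ℕ, ℂ) (Nat.pair k j)‖
        = ‖gseq b (Nat.pair k j)‖ * (‖(f : ∀ _ : ℕ, ℂ) n₀‖ / ‖gseq b n₀‖) := by
      have := hprop j
      have h2 : f (Nat.pair k j) = gseq b (Nat.pair k j) * f n₀ / gseq b n₀ := by
        field_simp [gseq_ne_zero b n₀]
        linear_combination -this
      rw [h2]
      rw [norm_div, norm_mul]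
      ring
    rw [h1, Real.mul_rpow (norm_nonneg _) (by positivity)]
    have h3 : ‖gseq b (Nat.pair k j)‖ ^ b = D * ((j:ℝ) + 1)⁻¹ := by
      rw [gseq_norm, Nat.unpair_pair]
      rw [Real.mul_rpow (by positivity) (by positivity)]
      congr 1
      rw [← Real.rpow_mul (by positivity : (0:ℝ) ≤ ((j:ℝ) + 1)),
        show (-1/b)*b = -1 by field_simp, Real.rpow_neg_one]
    rw [h3, hC]
    ring
  have hs3 : Summable fun j : ℕ => ((j:ℝ) + 1)⁻¹ := by
    have := (hs2.congr (fun j => hval j)).mul_left ((D * C)⁻¹)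
    apply this.congr
    intro j
    field_simp
  have hs4 : Summable fun n : ℕ => ((n:ℝ))⁻¹ := by
    rw [← summable_nat_add_iff 1] 
    apply hs3.congr
    intro j
    push_cast
    ring_nf
  exact Real.not_summable_natCast_inv hs4
end

section
/- Let 0 < b < ∞. Then there exists a ℂ-linear subspace F of the Banach space c₀ = C₀(ℕ, ℂ) such that F is closed in c₀, F is infinite dimensional (not finitely generated as a ℂ-module), and every nonzero element f of F does not belong to ℓ^b, i.e. ∑_{n} |f(n)|^b = ∞. -/
open scoped ZeroAtInfty
open Filter

noncomputable section SpaceabilityAux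

namespace SpaceabilityAux

/-- The weight sequence `w j = (j+1)^(-1/b)`. -/
def w (b : ℝ) (j : ℕ) : ℝ := ((j : ℝ) + 1) ^ (-(1 / b))

lemma w_pos (b : ℝ) (j : ℕ) : 0 < w b j :=
  Real.rpow_pos_of_pos (by positivity) _

lemma w_tendsto {b : ℝ} (hb : 0 < b) : Tendsto (w b) atTop (nhds 0) := by
  have h1 : Tendsto (fun x : ℝ => x ^ (-(1 / b))) atTop (nhds 0) :=
    tendsto_rpow_neg_atTop (by positivity)
  have h2 : Tendsto (fun j : ℕ => (j : ℝ) + 1) atTop atTop :=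
    tendsto_atTop_add_const_right _ 1 tendsto_natCast_atTop_atTop
  exact h1.comp h2

lemma w_rpow {b : ℝ} (hb : 0 < b) (j : ℕ) : w b j ^ b = ((j : ℝ) + 1)⁻¹ := by
  rw [w, ← Real.rpow_mul (by positivity)]
  have : -(1 / b) * b = -1 := by field_simp
  rw [this, Real.rpow_neg_one]

/-- The basic functions: `Y b k` is supported on row `k` of the pairing, with values `w`. -/
def Y (b : ℝ) (hb : 0 < b) (k : ℕ) : C₀(ℕ, ℂ) where
  toFun n := if n.unpair.1 = k then (w b n.unpair.2 : ℂ) else 0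
  continuous_toFun := continuous_of_discreteTopology
  zero_at_infty' := by
    rw [cocompact_eq_atTop, NormedAddCommGroup.tendsto_nhds_zero]
    intro ε hε
    obtain ⟨J, hJ⟩ := (Metric.tendsto_atTop.mp (w_tendsto hb)) ε hε
    rw [eventually_atTop]
    refine ⟨Nat.pair k J, fun n hn => ?_⟩
    by_cases h : n.unpair.1 = k
    · simp only [h, if_pos]
      have hj : J ≤ n.unpair.2 := by
        by_contra hlt
        push_neg at hlt
        have h2 := Nat.pair_lt_pair_right k hlt
        have h3 : Nat.pair k n.unpair.2 = n := by rw [← h]; exact Nat.pair_unpair n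
        omega
      have := hJ _ hj
      rw [Real.dist_eq, sub_zero, abs_of_pos (w_pos b _)] at this
      simpa [Complex.norm_real, abs_of_pos (w_pos b _)] using this
    · simpa [h] using hε

lemma Y_apply (b : ℝ) (hb : 0 < b) (k i j : ℕ) :
    Y b hb k (Nat.pair i j) = if i = k then (w b j : ℂ) else 0 := by
  simp [Y, Nat.unpair_pair]

/-- Evaluation at a point, as a linear map. -/
def evalₗ (n : ℕ) : C₀(ℕ, ℂ) →ₗ[ℂ] ℂ where
  toFun f := f n
  map_add' f g := by simp
  map_smul' c f := by simp

lemma continuous_evalₗ (n : ℕ) : Continuous (evalₗ n) := by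
  have : LipschitzWith 1 (fun f : C₀(ℕ, ℂ) => f n) := by
    apply LipschitzWith.of_dist_le_mul
    intro f g
    rw [NNReal.coe_one, one_mul, ← ZeroAtInftyContinuousMap.dist_toBCF_eq_dist]
    exact BoundedContinuousFunction.dist_coe_le_dist (f := f.toBCF) (g := g.toBCF) n
  exact this.continuous

/-- The proportionality submodule: on each row `k`, `f` is proportional to `w`. -/
def S (b : ℝ) : Submodule ℂ C₀(ℕ, ℂ) where
  carrier := {f | ∀ k j j' : ℕ,
    f (Nat.pair k j) * (w b j' : ℂ) = f (Nat.pair k j') * (w b j : ℂ)}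
  add_mem' := by
    intro f g hf hg k j j'
    simp only [ZeroAtInftyContinuousMap.coe_add, Pi.add_apply]
    rw [add_mul, add_mul, hf k j j', hg k j j']
  zero_mem' := by intro k j j'; simp
  smul_mem' := by
    intro c f hf k j j'
    simp only [ZeroAtInftyContinuousMap.coe_smul, Pi.smul_apply, smul_eq_mul]
    rw [mul_assoc, mul_assoc, hf k j j']

lemma isClosed_S (b : ℝ) : IsClosed ((S b : Set C₀(ℕ, ℂ))) := by
  have : (S b : Set C₀(ℕ, ℂ)) = ⋂ (k : ℕ), ⋂ (j : ℕ), ⋂ (j' : ℕ),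
      {f : C₀(ℕ, ℂ) | f (Nat.pair k j) * (w b j' : ℂ) = f (Nat.pair k j') * (w b j : ℂ)} := by
    ext f
    simp only [Set.mem_iInter, SetLike.mem_coe]
    rfl
  rw [this]
  refine isClosed_iInter fun k => isClosed_iInter fun j => isClosed_iInter fun j' => ?_
  exact isClosed_eq
    (((continuous_evalₗ (Nat.pair k j))).mul continuous_const)
    (((continuous_evalₗ (Nat.pair k j'))).mul continuous_const)

lemma Y_mem_S (b : ℝ) (hb : 0 < b) (k : ℕ) : Y b hb k ∈ S b := by
  intro i j j'
  rw [Y_apply, Y_apply]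
  by_cases h : i = k
  · simp only [h, if_pos]
    ring
  · simp [h]

lemma Y_linearIndependent (b : ℝ) (hb : 0 < b) : LinearIndependent ℂ (Y b hb) := by
  rw [linearIndependent_iff']
  intro s g hsum i hi
  have := congrArg (evalₗ (Nat.pair i 0)) hsum
  rw [map_sum, map_zero] at this
  have hterm : ∀ i' ∈ s, evalₗ (Nat.pair i 0) (g i' • Y b hb i') =
      if i = i' then g i' * (w b 0 : ℂ) else 0 := by
    intro i' _
    simp only [evalₗ, LinearMap.coe_mk, AddHom.coe_mk, map_smul]
    simp only [ZeroAtInftyContinuousMap.coe_smul, Pi.smul_apply, smul_eq_mul]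
    rw [Y_apply]
    by_cases h : i = i'
    · simp [h]
    · simp [h]
  rw [Finset.sum_congr rfl hterm, Finset.sum_ite_eq s i (fun i' => g i' * (w b 0 : ℂ)),
    if_pos hi] at this
  have hw : (w b 0 : ℂ) ≠ 0 := by
    exact_mod_cast (w_pos b 0).ne'
  exact (mul_eq_zero.mp this).resolve_right hw

end SpaceabilityAux

end SpaceabilityAux

set_option maxHeartbeats 1000000 in
/-- Let `0 < b < ∞`. There is a closed, infinite-dimensional (not
finitely generated) `ℂ`-linear subspace `F` of the Banach space `c₀ = C₀(ℕ, ℂ)` every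
nonzero element of which does not belong to `ℓ^b`. -/
theorem spaceability_czero_ellB (b : ℝ) (hb : 0 < b) :
    ∃ F : Submodule ℂ C₀(ℕ, ℂ),
      IsClosed (F : Set C₀(ℕ, ℂ)) ∧
      ¬ F.FG ∧
      ∀ f ∈ F, f ≠ 0 → ¬ Summable fun n : ℕ => ‖f n‖ ^ b := by
  classical
  open SpaceabilityAux in
  refine ⟨(Submodule.span ℂ (Set.range (Y b hb))).topologicalClosure,
    Submodule.isClosed_topologicalClosure _, ?_, ?_⟩
  · -- not finitely generated
    intro hFG
    obtain ⟨t, ht⟩ := hFG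
    have hmem : ∀ k, Y b hb k ∈ (Submodule.span ℂ (Set.range (Y b hb))).topologicalClosure :=
      fun k => Submodule.le_topologicalClosure _
        (Submodule.subset_span (Set.mem_range_self k))
    have hle : Set.range (Y b hb) ≤ Submodule.span ℂ (t : Set C₀(ℕ, ℂ)) := by
      rw [ht]; rintro _ ⟨k, rfl⟩; exact hmem k
    have := (Y_linearIndependent b hb).finite_of_le_span_finite _ (t : Set C₀(ℕ, ℂ)) hle
    exact not_finite ℕ
  · -- nonzero elements are not in ℓ^b
    intro f hf hf0 hs
    -- f satisfies the proportionality property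
    have hfS : f ∈ S b := by
      have hle : (Submodule.span ℂ (Set.range (Y b hb))).topologicalClosure ≤ S b := by
        apply Submodule.topologicalClosure_minimal
        · rw [Submodule.span_le]
          rintro _ ⟨k, rfl⟩
          exact Y_mem_S b hb k
        · exact isClosed_S b
      exact hle hf
    obtain ⟨n₀, hn₀⟩ : ∃ n, f n ≠ 0 := by
      by_contra h
      push_neg at h
      exact hf0 (DFunLike.ext _ _ fun n => by simpa using h n)
    set k := n₀.unpair.1
    set j₀ := n₀.unpair.2
    have hpair : Nat.pair k j₀ = n₀ := Nat.pair_unpair n₀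
    -- summability over the row k
    have hinj : Function.Injective (fun j : ℕ => Nat.pair k j) := by
      intro j j' h
      have := congrArg (fun n => n.unpair.2) h
      simpa [Nat.unpair_pair] using this
    have hrow := hs.comp_injective hinj
    -- compute the norms on row k
    set C : ℝ := (‖f n₀‖ / w b j₀) ^ b with hC
    have hCpos : 0 < C := Real.rpow_pos_of_pos (div_pos (norm_pos_iff.mpr hn₀) (w_pos b j₀)) _
    have hval : ∀ j : ℕ, ‖f (Nat.pair k j)‖ ^ b = C * ((j : ℝ) + 1)⁻¹ := by
      intro j
      have hP := hfS k j j₀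
      rw [hpair] at hP
      have hnorm : ‖f (Nat.pair k j)‖ * w b j₀ = ‖f n₀‖ * w b j := by
        have h := congrArg norm hP
        rwa [norm_mul, norm_mul, Complex.norm_real, Complex.norm_real,
          Real.norm_eq_abs, Real.norm_eq_abs, abs_of_pos (w_pos b j₀),
          abs_of_pos (w_pos b j)] at h
      have hval' : ‖f (Nat.pair k j)‖ = ‖f n₀‖ / w b j₀ * w b j := by
        rw [div_mul_eq_mul_div, eq_div_iff (w_pos b j₀).ne']
        linarith [hnorm]
      rw [hval',
        Real.mul_rpow (div_nonneg (norm_nonneg _) (w_pos b j₀).le) (w_pos b j).le,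
        ← hC, w_rpow hb]
    have hrow2 : Summable fun j : ℕ => C * ((j : ℝ) + 1)⁻¹ := hrow.congr hval
    have : Summable fun j : ℕ => ((j : ℝ) + 1)⁻¹ :=
      (summable_mul_left_iff hCpos.ne').mp hrow2
    have h1 : Summable fun j : ℕ => ((j + 1 : ℕ) : ℝ)⁻¹ := by
      convert this using 2 with j
      push_cast
      ring
    exact Real.not_summable_natCast_inv
      ((summable_nat_add_iff (f := fun n : ℕ => ((n : ℝ))⁻¹) 1).mp h1)
end

section
/- Let a ∈ [0, ∞) and q ∈ [1, ∞] with a < q. Then there exists a ℂ-linear subspace F of the Banach space ℓ^q such that F is closed in ℓ^q, F is infinite dimensional (not finitely generated as a ℂ-module), and every nonzero element f of F fails to belong to ⋂_{p>a} ℓ^p; that is, for every nonzero f ∈ F there exists a real p with a < p < ∞ and ∑_{n} |f(n)|^p = ∞. -/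
open scoped ENNReal

noncomputable section SpaceabilityAux

namespace SpaceabilityAux

/-- Domination gives membership in `ℓ^q` (for `1 ≤ q`). -/
lemma memℓp_mono {q : ℝ≥0∞} (hq : 1 ≤ q) {f g : ℕ → ℂ} (hg : Memℓp g q)
    (h : ∀ n, ‖f n‖ ≤ ‖g n‖) : Memℓp f q := by
  rcases eq_or_ne q ∞ with rfl | hq'
  · rw [memℓp_infty_iff] at hg ⊢
    obtain ⟨C, hC⟩ := hg
    refine ⟨C, ?_⟩
    rintro - ⟨n, rfl⟩
    exact (h n).trans (hC ⟨n, rfl⟩)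
  · have hpos : 0 < q.toReal := ENNReal.toReal_pos (one_pos.trans_le hq).ne' hq'
    apply memℓp_gen
    refine Summable.of_nonneg_of_le (fun n => ?_) (fun n => ?_) (hg.summable hpos)
    · positivity
    · exact Real.rpow_le_rpow (norm_nonneg _) (h n) hpos.le

/-- the 2-adic valuation of `n+1` -/
def v (n : ℕ) : ℕ := (n + 1).factorization 2

lemma v_spec (i k : ℕ) : v (2 ^ i * (2 * k + 1) - 1) = i := by
  have hpos : 0 < 2 ^ i * (2 * k + 1) := by positivity
  have h1 : 2 ^ i * (2 * k + 1) - 1 + 1 = 2 ^ i * (2 * k + 1) := Nat.succ_pred_eq_of_pos hpos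
  unfold v
  rw [h1, Nat.factorization_mul (by positivity) (by omega),
    Nat.Prime.factorization_pow Nat.prime_two]
  have hodd : ¬ (2 ∣ (2 * k + 1)) := by omega
  simp [Nat.factorization_eq_zero_of_not_dvd hodd]

lemma g_inj (i : ℕ) : Function.Injective (fun k : ℕ => 2 ^ i * (2 * k + 1) - 1) := by
  intro k k' h
  simp only at h
  have h2 : (0:ℕ) < 2 ^ i := by positivity
  have hk : 2 ^ i * (2 * k + 1) = 2 ^ i * (2 * k' + 1) := by
    have h1 : 0 < 2 ^ i * (2 * k + 1) := by positivity
    have h1' : 0 < 2 ^ i * (2 * k' + 1) := by positivity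
    omega
  have := Nat.eq_of_mul_eq_mul_left h2 hk
  omega

end SpaceabilityAux

end SpaceabilityAux

open SpaceabilityAux

/-- Let `a ∈ [0, ∞)` and `q ∈ [1, ∞]` with `a < q`. There is a closed,
infinite-dimensional (not finitely generated) `ℂ`-linear subspace `F` of the Banach
space `ℓ^q` every nonzero element of which fails to belong to `⋂_{p > a} ℓ^p`. -/
theorem spaceability_ellQ_interP (a : ℝ) (q : ℝ≥0∞) [Fact (1 ≤ q)]
    (ha : 0 ≤ a) (haq : ENNReal.ofReal a < q) :
    ∃ F : Submodule ℂ (lp (fun _ : ℕ => ℂ) q),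
      IsClosed (F : Set (lp (fun _ : ℕ => ℂ) q)) ∧
      ¬ F.FG ∧
      ∀ f ∈ F, f ≠ 0 →
        ∃ p : ℝ, a < p ∧ ¬ Summable fun n : ℕ => ‖(f : ∀ _ : ℕ, ℂ) n‖ ^ p := by
  classical
  have hq1 : 1 ≤ q := Fact.out
  -- choose the exponent b with a < b and ofReal b < q
  obtain ⟨r, har, hrq⟩ := exists_between haq
  have hrt : r ≠ ⊤ := hrq.ne_top
  set b : ℝ := r.toReal with hbdef
  have hab : a < b := (ENNReal.ofReal_lt_iff_lt_toReal ha hrt).1 har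
  have hb0 : 0 < b := lt_of_le_of_lt ha hab
  have hbq : ENNReal.ofReal b < q := by
    rw [hbdef, ENNReal.ofReal_toReal hrt]; exact hrq
  -- the basic sequence
  set x : ℕ → ℂ := fun n => ((((n + 1 : ℕ) : ℝ)) ^ (-(1 / b)) : ℝ) with hxdef
  have hxr_pos : ∀ n : ℕ, (0:ℝ) < (((n + 1 : ℕ) : ℝ)) ^ (-(1 / b)) := by
    intro n
    apply Real.rpow_pos_of_pos
    positivity
  have hxnorm : ∀ n : ℕ, ‖x n‖ = (((n + 1 : ℕ) : ℝ)) ^ (-(1 / b)) := by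
    intro n
    rw [hxdef]
    simp only [Complex.norm_real]
    exact Real.norm_of_nonneg (hxr_pos n).le
  have hxne : ∀ n, x n ≠ 0 := by
    intro n h
    have h2 := hxnorm n
    rw [h, norm_zero] at h2
    exact absurd h2.symm (hxr_pos n).ne'
  -- membership of x in ℓ^q
  have hxmem : Memℓp x q := by
    rcases eq_or_ne q ∞ with rfl | hq'
    · apply memℓp_infty
      refine ⟨1, ?_⟩
      rintro - ⟨n, rfl⟩
      show ‖x n‖ ≤ 1
      rw [hxnorm n]
      apply Real.rpow_le_one_of_one_le_of_nonpos
      · exact_mod_cast Nat.one_le_iff_ne_zero.2 (Nat.succ_ne_zero n)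
      · simp [one_div, inv_nonneg, hb0.le]
    · have hqt : 0 < q.toReal := ENNReal.toReal_pos (one_pos.trans_le hq1).ne' hq'
      have hbq' : b < q.toReal := (ENNReal.ofReal_lt_iff_lt_toReal hb0.le hq').1 hbq
      apply memℓp_gen
      have heq : ∀ n : ℕ, ‖x n‖ ^ q.toReal
          = (((n + 1 : ℕ) : ℝ)) ^ (-(q.toReal / b)) := by
        intro n
        rw [hxnorm n, ← Real.rpow_mul (by positivity)]
        ring_nf
      simp only [heq]
      have hsum : Summable (fun n : ℕ => ((n : ℝ)) ^ (-(q.toReal / b))) := by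
        rw [Real.summable_nat_rpow]
        have : 1 < q.toReal / b := (one_lt_div hb0).2 hbq'
        linarith
      have h2 := (summable_nat_add_iff 1).2 hsum
      simpa using h2
  -- evaluation maps are continuous
  have hev : ∀ n : ℕ, Continuous fun f : lp (fun _ : ℕ => ℂ) q => (f : ∀ _ : ℕ, ℂ) n := by
    intro n
    exact (continuous_apply n).comp (lp.uniformContinuous_coe (p := q)).continuous
  -- the subspace
  set F : Submodule ℂ (lp (fun _ : ℕ => ℂ) q) :=
    { carrier := {f : lp (fun _ : ℕ => ℂ) q |
        ∀ n m : ℕ, v n = v m → (f : ∀ _ : ℕ, ℂ) n * x m = (f : ∀ _ : ℕ, ℂ) m * x n},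
      add_mem' := by
        intro f g hf hg n m hnm
        simp only [Set.mem_setOf_eq] at hf hg ⊢
        have hcoe : ((f + g : lp (fun _ : ℕ => ℂ) q) : ∀ _ : ℕ, ℂ)
            = (f : ∀ _ : ℕ, ℂ) + g := lp.coeFn_add f g
        rw [hcoe]
        simp only [Pi.add_apply]
        rw [add_mul, add_mul, hf n m hnm, hg n m hnm]
      zero_mem' := by intro n m _; simp
      smul_mem' := by
        intro c f hf n m hnm
        simp only [Set.mem_setOf_eq] at hf ⊢
        have hcoe : ((c • f : lp (fun _ : ℕ => ℂ) q) : ∀ _ : ℕ, ℂ) = c • (f : ∀ _ : ℕ, ℂ) :=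
          lp.coeFn_smul c f
        rw [hcoe]
        simp only [Pi.smul_apply, smul_eq_mul]
        rw [mul_assoc, mul_assoc, hf n m hnm] } with hFdef
  have hFmem : ∀ f : lp (fun _ : ℕ => ℂ) q, f ∈ F ↔
      ∀ n m : ℕ, v n = v m → (f : ∀ _ : ℕ, ℂ) n * x m = (f : ∀ _ : ℕ, ℂ) m * x n :=
    fun f => Iff.rfl
  refine ⟨F, ?_, ?_, ?_⟩
  -- closedness
  · have hset : (F : Set (lp (fun _ : ℕ => ℂ) q))
        = ⋂ (n : ℕ) (m : ℕ) (_ : v n = v m),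
          {f : lp (fun _ : ℕ => ℂ) q | (f : ∀ _ : ℕ, ℂ) n * x m = (f : ∀ _ : ℕ, ℂ) m * x n} := by
      ext f
      simp only [SetLike.mem_coe, hFmem, Set.mem_iInter, Set.mem_setOf_eq]
    rw [hset]
    refine isClosed_iInter fun n => isClosed_iInter fun m => isClosed_iInter fun _ => ?_
    exact isClosed_eq ((hev n).mul continuous_const) ((hev m).mul continuous_const)
  -- not finitely generated
  · intro hFG
    have hemem : ∀ i : ℕ, Memℓp (fun n : ℕ => if v n = i then x n else 0) q := by
      intro i
      apply memℓp_mono hq1 hxmem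
      intro n
      by_cases h : v n = i <;> simp [h]
    set e : ℕ → lp (fun _ : ℕ => ℂ) q := fun i => ⟨fun n => if v n = i then x n else 0, hemem i⟩
      with hedef
    have hecoe : ∀ i n, (e i : ∀ _ : ℕ, ℂ) n = if v n = i then x n else 0 := fun i n => rfl
    have heF : ∀ i, e i ∈ F := by
      intro i
      rw [hFmem]
      intro n m hnm
      rw [hecoe, hecoe, hnm]
      by_cases h : v m = i
      · simp only [h, if_true]
        ring
      · simp [h]
    -- linear independence of e
    have hli : LinearIndependent ℂ e := by
      rw [linearIndependent_iff']
      intro s g hsum i hi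
      have hcoord : ((∑ j ∈ s, g j • e j : lp (fun _ : ℕ => ℂ) q) : ∀ _ : ℕ, ℂ)
          (2 ^ i * (2 * 0 + 1) - 1) = 0 := by
        rw [hsum]; simp
      rw [lp.coeFn_sum] at hcoord
      simp only [Finset.sum_apply, lp.coeFn_smul, Pi.smul_apply, smul_eq_mul] at hcoord
      have hval : v (2 ^ i * (2 * 0 + 1) - 1) = i := v_spec i 0
      have h3 : ∑ j ∈ s, g j * (if v (2 ^ i * (2 * 0 + 1) - 1) = j then
          x (2 ^ i * (2 * 0 + 1) - 1) else 0) = 0 := by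
        simpa [hecoe] using hcoord
      rw [Finset.sum_congr rfl (fun j _ => by rw [hval])] at h3
      have hsingle : ∑ j ∈ s, g j * (if i = j then x (2 ^ i * (2 * 0 + 1) - 1) else 0)
          = g i * x (2 ^ i * (2 * 0 + 1) - 1) := by
        rw [Finset.sum_eq_single i]
        · simp
        · intro j _ hji
          simp [Ne.symm hji]
        · intro h
          exact absurd hi h
      rw [hsingle] at h3
      rcases mul_eq_zero.1 h3 with h | h
      · exact h
      · exact absurd h (hxne _)
    have hfin : Module.Finite ℂ F := Module.Finite.iff_fg.2 hFG
    set ε : ℕ → F := fun i => ⟨e i, heF i⟩ with hεdef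
    have hliε : LinearIndependent ℂ ε := by
      apply LinearIndependent.of_comp F.subtype
      have hcomp : F.subtype ∘ ε = e := rfl
      rw [hcomp]
      exact hli
    have hcard := hliε.lt_aleph0_of_finite
    simp [Cardinal.mk_denumerable] at hcard
  -- every nonzero element escapes some ℓ^p with p > a
  · intro f hfF hf0
    rw [hFmem] at hfF
    have hex : ∃ n₀, (f : ∀ _ : ℕ, ℂ) n₀ ≠ 0 := by
      by_contra h
      push_neg at h
      exact hf0 (lp.ext (funext h))
    obtain ⟨n₀, hn₀⟩ := hex
    set i : ℕ := v n₀ with hidef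
    set c : ℂ := (f : ∀ _ : ℕ, ℂ) n₀ / x n₀ with hcdef
    have hcne : c ≠ 0 := div_ne_zero hn₀ (hxne n₀)
    have hfm : ∀ m, v m = i → (f : ∀ _ : ℕ, ℂ) m = c * x m := by
      intro m hm
      have hrel := hfF m n₀ (by rw [hm])
      rw [hcdef, div_mul_eq_mul_div, eq_div_iff (hxne n₀), hrel]
    refine ⟨b, hab, ?_⟩
    intro hs
    -- restrict the summability along the block A_i
    have hs2 := hs.comp_injective (g_inj i)
    have hterm : ∀ k : ℕ,
        ‖(f : ∀ _ : ℕ, ℂ) (2 ^ i * (2 * k + 1) - 1)‖ ^ b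
          = ‖c‖ ^ b * (((2 ^ i * (2 * k + 1) : ℕ) : ℝ))⁻¹ := by
      intro k
      have hv := v_spec i k
      rw [hfm _ hv]
      have h1 : 2 ^ i * (2 * k + 1) - 1 + 1 = 2 ^ i * (2 * k + 1) :=
        Nat.succ_pred_eq_of_pos (Nat.mul_pos (Nat.two_pow_pos i) (by omega))
      have hNpos : (0:ℝ) < ((2 ^ i * (2 * k + 1) : ℕ) : ℝ) := by
        exact_mod_cast (by positivity : 0 < 2 ^ i * (2 * k + 1))
      rw [norm_mul, Real.mul_rpow (norm_nonneg _) (norm_nonneg _), hxnorm, h1]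
      congr 1
      rw [← Real.rpow_mul hNpos.le]
      have hexp : -(1 / b) * b = -1 := by
        field_simp
      rw [hexp, Real.rpow_neg_one]
    simp only [Function.comp_def] at hs2
    rw [funext hterm] at hs2
    have hcb : (0:ℝ) < ‖c‖ ^ b := Real.rpow_pos_of_pos (norm_pos_iff.2 hcne) b
    have hs3 : Summable (fun k : ℕ => (((2 ^ i * (2 * k + 1) : ℕ) : ℝ))⁻¹) := by
      have h := hs2.mul_left (‖c‖ ^ b)⁻¹
      refine h.congr fun k => ?_
      rw [← mul_assoc, inv_mul_cancel₀ hcb.ne', one_mul]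
    -- compare with the harmonic series
    have hs4 : Summable (fun k : ℕ => (((k : ℝ) + 1))⁻¹) := by
      refine Summable.of_nonneg_of_le (fun k => by positivity) (fun k => ?_)
        (hs3.mul_left ((2:ℝ) ^ (i+1)))
      have hN : ((2 ^ i * (2 * k + 1) : ℕ) : ℝ) ≤ 2 ^ (i+1) * ((k:ℝ) + 1) := by
        push_cast
        rw [pow_succ]
        nlinarith [pow_pos (by norm_num : (0:ℝ) < 2) i, Nat.cast_nonneg (α := ℝ) k]
      have hNpos : (0:ℝ) < ((2 ^ i * (2 * k + 1) : ℕ) : ℝ) := by positivity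
      have hinv := inv_anti₀ hNpos hN
      calc ((k:ℝ)+1)⁻¹ = 2^(i+1) * ((2:ℝ)^(i+1) * ((k:ℝ)+1))⁻¹ := by
            rw [mul_inv, ← mul_assoc, mul_inv_cancel₀ (by positivity), one_mul]
        _ ≤ 2^(i+1) * (((2 ^ i * (2 * k + 1) : ℕ) : ℝ))⁻¹ :=
            mul_le_mul_of_nonneg_left hinv (by positivity)
    have hs5 : Summable (fun n : ℕ => ((n:ℝ))⁻¹) := by
      rw [← summable_nat_add_iff 1]
      simpa using hs4
    exact Real.not_summable_natCast_inv hs5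
end

section
/- Let 0 < p < q < ∞, let a < b be real numbers and let ω ∈ (a, b). Then the function g(z) = exp(−(1/q) · log(1 − e^{−iω} z)) (principal branch of the complex logarithm) is holomorphic on the open unit disc D = {z ∈ ℂ : |z| < 1}, it belongs to H^p, i.e. sup_{0<r<1} ∫_0^{2π} |g(r e^{iθ})|^p dθ < ∞, and it does not belong to the localized Hardy space H^q_{[a,b]}(D), i.e. sup_{0<r<1} ∫_a^b |g(r e^{iθ})|^q dθ = ∞. -/
open scoped ENNReal Real
open Complex MeasureTheory Set

/-- `∫_a^b |f(r e^{iθ})|^e dθ`, as a Lebesgue integral with values in `[0, ∞]`. -/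
noncomputable def hardyArcIntegral (f : ℂ → ℂ) (e a b r : ℝ) : ℝ≥0∞ :=
  ∫⁻ θ in Ioc a b, ENNReal.ofReal (‖f ((r : ℂ) * Complex.exp (θ * Complex.I))‖ ^ e)

/-!
On the circle of radius `r`, `|g(r e^{iθ})| = |1 - r e^{i(θ-ω)}|^{-1/q}`. Since
`|1 - r e^{it}| ≥ |sin (t/2)|` for every `r ≥ 0`, all the `H^p` integrals are dominated by
`∫ |sin ((θ-ω)/2)|^{-p/q} dθ`, which is finite because `p/q < 1` and `|sin (t/2)| ≥ |t|/π`
on `[-π, π]`. Conversely `|1 - r e^{it}| ≤ (1 - r) + |t|`, so the `H^q` integral over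
`[ω, b]` is at least `log (1 + (b - ω)/(1 - r))`, which is unbounded as `r → 1`.
-/

open Filter Topology

lemma norm_one_sub_mul_exp_sq (r t : ℝ) :
    ‖1 - r * exp (t * I)‖ ^ 2 = (1 - r) ^ 2 + 4 * r * Real.sin (t / 2) ^ 2 := by
  have hcos : Real.cos t = 1 - 2 * Real.sin (t / 2) ^ 2 := by
    rw [← Real.cos_two_mul_eq_one_sub, mul_div_cancel₀ _ two_ne_zero]
  rw [Complex.sq_norm, Complex.normSq_apply]
  simp only [sub_re, one_re, mul_re, ofReal_re, ofReal_im, exp_ofReal_mul_I_re,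
    exp_ofReal_mul_I_im, sub_im, one_im, mul_im]
  linear_combination r ^ 2 * Real.sin_sq_add_cos_sq t - 2 * r * hcos

lemma abs_sin_half_le_norm_one_sub_mul_exp {r : ℝ} (hr : 0 ≤ r) (t : ℝ) :
    |Real.sin (t / 2)| ≤ ‖1 - r * exp (t * I)‖ := by
  refine abs_le_of_sq_le_sq' ?_ (norm_nonneg _) |>.2
  rw [sq_abs, norm_one_sub_mul_exp_sq]
  -- `(1 - r)² + 4r s² - s² = (1 - r)² (1 - s²) + (r² + 2r) s²`
  nlinarith [mul_nonneg (sq_nonneg (1 - r)) (sub_nonneg.2 (Real.sin_sq_le_one (t / 2))),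
    mul_nonneg (by positivity : 0 ≤ r ^ 2 + 2 * r) (sq_nonneg (Real.sin (t / 2)))]

lemma norm_one_sub_mul_exp_le {r : ℝ} (hr0 : 0 ≤ r) (hr1 : r ≤ 1) (t : ℝ) :
    ‖1 - r * exp (t * I)‖ ≤ (1 - r) + |t| := by
  have hsplit : 1 - r * exp (t * I) = ((1 - r : ℝ) : ℂ) - r * (exp (t * I) - 1) := by
    push_cast; ring
  calc ‖1 - r * exp (t * I)‖ ≤ ‖((1 - r : ℝ) : ℂ)‖ + ‖(r : ℂ) * (exp (t * I) - 1)‖ := by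
        rw [hsplit]; exact norm_sub_le _ _
    _ ≤ (1 - r) + 1 * |t| := by
        rw [norm_mul, Complex.norm_real, Complex.norm_real, Real.norm_of_nonneg (by linarith),
          Real.norm_of_nonneg hr0]
        gcongr
        rw [mul_comm]
        exact Real.norm_exp_I_mul_ofReal_sub_one_le
    _ = (1 - r) + |t| := by ring

lemma one_sub_le_norm_one_sub_mul_exp {r : ℝ} (hr : 0 ≤ r) (t : ℝ) :
    1 - r ≤ ‖1 - r * exp (t * I)‖ := by
  simpa [norm_exp_ofReal_mul_I, abs_of_nonneg hr] using
    norm_sub_norm_le (1 : ℂ) (r * exp (t * I))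

noncomputable def singularFunction (γ ω : ℝ) (z : ℂ) : ℂ :=
  exp (-(γ : ℂ) * log (1 - exp (-(ω : ℂ) * I) * z))

lemma one_sub_mem_slitPlane {w : ℂ} (hw : ‖w‖ < 1) : 1 - w ∈ slitPlane := by
  rw [sub_eq_add_neg]
  exact mem_slitPlane_of_norm_lt_one (by rwa [norm_neg])

lemma norm_exp_neg_ofReal_mul_I_mul (ω : ℝ) (z : ℂ) : ‖exp (-(ω : ℂ) * I) * z‖ = ‖z‖ := by
  rw [norm_mul, ← ofReal_neg, norm_exp_ofReal_mul_I, one_mul]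

theorem differentiableOn_singularFunction (γ ω : ℝ) :
    DifferentiableOn ℂ (singularFunction γ ω) (Metric.ball 0 1) := by
  intro z hz
  have hmem : 1 - exp (-(ω : ℂ) * I) * z ∈ slitPlane := by
    refine one_sub_mem_slitPlane ?_
    rwa [norm_exp_neg_ofReal_mul_I_mul, ← dist_zero_right]
  have hlin : DifferentiableAt ℂ (fun z => 1 - exp (-(ω : ℂ) * I) * z) z := by fun_prop
  exact ((hlin.clog hmem).const_mul _).cexp.differentiableWithinAt

lemma norm_exp_neg_mul_log_one_sub {w : ℂ} (hw : ‖w‖ < 1) (γ : ℝ) :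
    ‖exp (-(γ : ℂ) * log (1 - w))‖ = ‖1 - w‖ ^ (-γ) := by
  have hne : 1 - w ≠ 0 := slitPlane_ne_zero (one_sub_mem_slitPlane hw)
  rw [← ofReal_neg, mul_comm, ← cpow_def_of_ne_zero hne, norm_cpow_real]

lemma exp_neg_mul_I_mul_ofReal_mul_exp (ω r θ : ℝ) :
    exp (-(ω : ℂ) * I) * (r * exp (θ * I)) = r * exp ((θ - ω : ℝ) * I) := by
  rw [mul_left_comm, ← exp_add]; push_cast; ring_nf

lemma hardyArcIntegral_singularFunction (γ ω e a b : ℝ) {r : ℝ} (hr0 : 0 ≤ r) (hr1 : r < 1) :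
    hardyArcIntegral (singularFunction γ ω) e a b r =
      ∫⁻ θ in Ioc a b, ENNReal.ofReal (‖1 - r * exp ((θ - ω : ℝ) * I)‖ ^ (-(γ * e))) := by
  refine lintegral_congr fun θ => ?_
  have hw : ‖(r : ℂ) * exp ((θ - ω : ℝ) * I)‖ < 1 := by
    rwa [norm_mul, norm_exp_ofReal_mul_I, mul_one, norm_real, Real.norm_of_nonneg hr0]
  rw [singularFunction, exp_neg_mul_I_mul_ofReal_mul_exp, norm_exp_neg_mul_log_one_sub hw,
    ← Real.rpow_mul (norm_nonneg _), neg_mul]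

lemma intervalIntegrable_abs_rpow_neg {α : ℝ} (hα : α < 1) (a b : ℝ) :
    IntervalIntegrable (fun x : ℝ => |x| ^ (-α)) volume a b := by
  have h := (intervalIntegral.intervalIntegrable_cpow' (a := a) (b := b)
    (r := ((-α : ℝ) : ℂ)) (by simpa using hα)).norm
  simpa only [norm_cpow_real, norm_real, Real.norm_eq_abs] using h

lemma abs_sin_half_rpow_neg_le {α t : ℝ} (hα : 0 ≤ α) (ht0 : t ≠ 0) (htπ : |t| ≤ π) :
    |Real.sin (t / 2)| ^ (-α) ≤ π ^ α * |t| ^ (-α) := by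
  have hsin : |t| / π ≤ |Real.sin (t / 2)| := by
    have h := Real.mul_abs_le_abs_sin (x := t / 2) (by rw [abs_div, abs_two]; linarith)
    rwa [abs_div, abs_two, show 2 / π * (|t| / 2) = |t| / π by field_simp] at h
  calc |Real.sin (t / 2)| ^ (-α) ≤ (|t| / π) ^ (-α) :=
        Real.rpow_le_rpow_of_nonpos (by positivity) hsin (by linarith)
    _ = π ^ α * |t| ^ (-α) := by
        rw [Real.div_rpow (abs_nonneg _) Real.pi_pos.le, Real.rpow_neg Real.pi_pos.le,
          div_inv_eq_mul, mul_comm]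

lemma intervalIntegrable_abs_sin_half_sub_rpow_neg (ω : ℝ) {α : ℝ} (hα0 : 0 ≤ α) (hα1 : α < 1)
    (a b : ℝ) :
    IntervalIntegrable (fun θ => |Real.sin ((θ - ω) / 2)| ^ (-α)) volume a b := by
  have hper : Function.Periodic (fun θ => |Real.sin ((θ - ω) / 2)| ^ (-α)) (2 * π) := by
    intro θ
    dsimp only
    rw [show (θ + 2 * π - ω) / 2 = (θ - ω) / 2 + π by ring, Real.sin_add_pi, abs_neg]
  refine hper.intervalIntegrable (t := ω - π) (by positivity) ?_ a b
  have hdom :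
      IntervalIntegrable (fun θ => π ^ α * |θ - ω| ^ (-α)) volume (ω - π) (ω - π + 2 * π) := by
    have h := ((intervalIntegrable_abs_rpow_neg hα1 (-π) π).comp_sub_right ω).const_mul (π ^ α)
    rwa [show ω - π + 2 * π = π + ω by ring, show ω - π = -π + ω by ring]
  refine hdom.mono_fun' (Measurable.aestronglyMeasurable (by fun_prop)) ?_
  rw [uIoc_of_le (by linarith [Real.pi_pos])]
  filter_upwards [ae_restrict_mem measurableSet_Ioc,
    ae_restrict_of_ae ((countable_singleton ω).ae_notMem volume)] with θ hθ hθω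
  rw [Real.norm_of_nonneg (by positivity)]
  refine abs_sin_half_rpow_neg_le hα0 (sub_ne_zero.2 hθω) (abs_le.2 ⟨?_, ?_⟩) <;>
    linarith [hθ.1, hθ.2, Real.pi_pos]

lemma ae_sin_half_sub_ne_zero (ω : ℝ) : ∀ᵐ θ : ℝ, Real.sin ((θ - ω) / 2) ≠ 0 := by
  have hzeros : {θ : ℝ | Real.sin ((θ - ω) / 2) = 0} ⊆ range fun n : ℤ => ω + 2 * n * π := by
    intro θ hθ
    obtain ⟨n, hn⟩ := Real.sin_eq_zero_iff.1 hθ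
    exact ⟨n, by linarith⟩
  simpa [ae_iff] using ((countable_range _).mono hzeros).measure_zero volume

theorem iSup_hardyArcIntegral_singularFunction_lt_top (γ ω e a b : ℝ) (h0 : 0 ≤ γ * e)
    (h1 : γ * e < 1) :
    ⨆ r ∈ Ioo (0 : ℝ) 1, hardyArcIntegral (singularFunction γ ω) e a b r < ⊤ := by
  have hint : IntegrableOn (fun θ => |Real.sin ((θ - ω) / 2)| ^ (-(γ * e))) (Ioc a b) :=
    (intervalIntegrable_abs_sin_half_sub_rpow_neg ω h0 h1 a b).def'.mono_set Ioc_subset_uIoc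
  refine lt_of_le_of_lt (iSup₂_le fun r hr => ?_) hint.setLIntegral_lt_top
  rw [hardyArcIntegral_singularFunction _ _ _ _ _ hr.1.le hr.2]
  refine lintegral_mono_ae ?_
  filter_upwards [ae_restrict_of_ae (ae_sin_half_sub_ne_zero ω)] with θ hθ
  refine ENNReal.ofReal_le_ofReal (Real.rpow_le_rpow_of_nonpos (abs_pos.2 hθ) ?_ (by linarith))
  exact abs_sin_half_le_norm_one_sub_mul_exp hr.1.le _

lemma integral_inv_sub_add (ω b : ℝ) {ε : ℝ} (hωb : ω ≤ b) (hε : 0 < ε) :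
    ∫ θ in ω..b, (θ - ω + ε)⁻¹ = Real.log (1 + (b - ω) / ε) := by
  simp_rw [sub_add_eq_add_sub, add_sub_assoc]
  rw [intervalIntegral.integral_comp_add_right (fun x => x⁻¹),
    integral_inv_of_pos (by linarith) (by linarith), one_add_div hε.ne']
  congr 2 <;> ring

lemma ofReal_log_le_lintegral_inv_norm_one_sub_mul_exp {r : ℝ} (hr0 : 0 ≤ r) (hr1 : r < 1)
    {ω b : ℝ} (hωb : ω ≤ b) :
    ENNReal.ofReal (Real.log (1 + (b - ω) / (1 - r))) ≤
      ∫⁻ θ in Ioc ω b, ENNReal.ofReal (‖1 - r * exp ((θ - ω : ℝ) * I)‖⁻¹) := by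
  have hε : 0 < 1 - r := sub_pos.2 hr1
  have hint : IntervalIntegrable (fun θ => (θ - ω + (1 - r))⁻¹) volume ω b := by
    refine intervalIntegral.intervalIntegrable_inv (fun θ hθ => ?_) (by fun_prop)
    rw [uIcc_of_le hωb] at hθ
    linarith [hθ.1]
  rw [← integral_inv_sub_add ω b hωb hε, intervalIntegral.integral_of_le hωb,
    ofReal_integral_eq_lintegral_ofReal (hint.def'.mono_set Ioc_subset_uIoc) ?_]
  · refine lintegral_mono_ae ?_
    filter_upwards [ae_restrict_mem measurableSet_Ioc] with θ hθ
    have hnorm := norm_one_sub_mul_exp_le hr0 hr1.le (θ - ω)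
    rw [abs_of_nonneg (by linarith [hθ.1])] at hnorm
    refine ENNReal.ofReal_le_ofReal (inv_anti₀ ?_ (by linarith))
    linarith [one_sub_le_norm_one_sub_mul_exp hr0 (θ - ω)]
  · filter_upwards [ae_restrict_mem measurableSet_Ioc] with θ hθ
    exact inv_nonneg.2 (by linarith [hθ.1])

lemma tendsto_log_one_add_div_nhdsGT_zero {c : ℝ} (hc : 0 < c) :
    Tendsto (fun ε => Real.log (1 + c / ε)) (𝓝[>] 0) atTop := by
  refine Real.tendsto_log_atTop.comp (tendsto_atTop_add_const_left _ 1 ?_)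
  simpa only [← div_eq_mul_inv] using tendsto_inv_nhdsGT_zero.const_mul_atTop hc

theorem iSup_hardyArcIntegral_singularFunction_eq_top {γ e : ℝ} (h : γ * e = 1) {a b ω : ℝ}
    (hω : ω ∈ Ico a b) :
    ⨆ r ∈ Ioo (0 : ℝ) 1, hardyArcIntegral (singularFunction γ ω) e a b r = ⊤ := by
  rw [eq_top_iff, ← ENNReal.iSup_natCast]
  refine iSup_le fun n => ?_
  obtain ⟨ε, hε_large, hε⟩ :=
    (((tendsto_log_one_add_div_nhdsGT_zero (sub_pos.2 hω.2)).eventually_ge_atTop (n : ℝ)).and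
      (Ioo_mem_nhdsGT one_pos)).exists
  have hr : 1 - ε ∈ Ioo (0 : ℝ) 1 := ⟨by linarith [hε.2], by linarith [hε.1]⟩
  refine le_iSup₂_of_le (1 - ε) hr ?_
  rw [hardyArcIntegral_singularFunction _ _ _ _ _ hr.1.le hr.2, h]
  simp_rw [Real.rpow_neg_one]
  calc (n : ℝ≥0∞) = ENNReal.ofReal n := (ENNReal.ofReal_natCast n).symm
    _ ≤ ENNReal.ofReal (Real.log (1 + (b - ω) / (1 - (1 - ε)))) := by
        rw [sub_sub_cancel]; exact ENNReal.ofReal_le_ofReal hε_large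
    _ ≤ _ := ofReal_log_le_lintegral_inv_norm_one_sub_mul_exp hr.1.le hr.2 hω.2.le
    _ ≤ _ := lintegral_mono_set (Ioc_subset_Ioc hω.1 le_rfl)

theorem singular_function_in_Hp_not_localized_Hq_general (p q a b ω : ℝ)
    (hp : 0 < p) (hpq : p < q) (hω : ω ∈ Ioo a b)
    (g : ℂ → ℂ)
    (hg : ∀ z : ℂ, g z =
      Complex.exp (-(1 / q : ℂ) * Complex.log (1 - Complex.exp (-(ω : ℂ) * Complex.I) * z))) :
    DifferentiableOn ℂ g (Metric.ball (0 : ℂ) 1) ∧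
    (⨆ r ∈ Ioo (0 : ℝ) 1, hardyArcIntegral g p 0 (2 * π) r) < ⊤ ∧
    (⨆ r ∈ Ioo (0 : ℝ) 1, hardyArcIntegral g q a b r) = ⊤ := by
  have hq : 0 < q := hp.trans hpq
  obtain rfl : g = singularFunction (1 / q) ω := funext fun z => by
    rw [hg, singularFunction]
    push_cast
    rfl
  refine ⟨differentiableOn_singularFunction _ _,
    iSup_hardyArcIntegral_singularFunction_lt_top _ _ _ _ _ (by positivity) ?_,
    iSup_hardyArcIntegral_singularFunction_eq_top (one_div_mul_cancel hq.ne')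
      (Ioo_subset_Ico_self hω)⟩
  rwa [one_div_mul_eq_div, div_lt_one hq]

/-- Let `0 < p < q < ∞`, `a < b` and `ω ∈ (a, b)`. The function
`g(z) = exp(-(1/q) log(1 - e^{-iω} z))` (principal branch) is holomorphic on the open
unit disc, belongs to `H^p`, and does not belong to the localized Hardy space
`H^q_{[a,b]}(D)`. -/
theorem singular_function_in_Hp_not_localized_Hq (p q a b ω : ℝ)
    (hp : 0 < p) (hpq : p < q) (hab : a < b) (hω : ω ∈ Ioo a b)
    (g : ℂ → ℂ)
    (hg : ∀ z : ℂ, g z =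
      Complex.exp (-(1 / q : ℂ) * Complex.log (1 - Complex.exp (-(ω : ℂ) * Complex.I) * z))) :
    DifferentiableOn ℂ g (Metric.ball (0 : ℂ) 1) ∧
    (⨆ r ∈ Ioo (0 : ℝ) 1, hardyArcIntegral g p 0 (2 * π) r) < ⊤ ∧
    (⨆ r ∈ Ioo (0 : ℝ) 1, hardyArcIntegral g q a b r) = ⊤ :=
  singular_function_in_Hp_not_localized_Hq_general p q a b ω hp hpq hω g hg
end

section
/- Let 0 < p < q < ∞. Then there exists a sequence of functions g_n : ℂ → ℂ (n ∈ ℕ), each holomorphic on the open unit disc D = {z ∈ ℂ : |z| < 1}, such that for every N ∈ ℕ and all complex scalars λ_0, …, λ_N with λ_N ≠ 0, the linear combination L = λ_0 g_0 + ⋯ + λ_N g_N belongs to H^p, i.e. sup_{0<r<1} ∫_0^{2π} |L(r e^{iθ})|^p dθ < ∞, and does not belong to H^q, i.e. sup_{0<r<1} ∫_0^{2π} |L(r e^{iθ})|^q dθ = ∞. In particular, the ℂ-linear span of {g_n} is an infinite-dimensional vector space F with F \ {0} ⊆ H^p \ H^q. -/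
/-!
Take `g n z = (1 - z) ^ (-aₙ)` with `aₙ` strictly increasing in `(1/q, 1/p)`. A combination
`L = ∑_{n ≤ N} λₙ gₙ` with `λ_N ≠ 0` behaves like `λ_N (1 - z) ^ (-a_N)` near `z = 1`, since the
other terms are `o(|1 - z| ^ (-a_N))`, and it is `O(|1 - z| ^ (-a_N))` on the whole disc.
By Jordan's inequality `|1 - r e^{iθ}| ≳ min(θ, 2π - θ)` uniformly in `r ≤ 1`, so `|L|^p` is
dominated on every circle by an integrable function, because `a_N p < 1`. On the other hand, on the
arc `0 < θ ≤ ε` of radius `1 - ε` we have `|1 - z| ≤ 2ε`, so the `q`-th integral mean is at least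
a multiple of `ε ^ (1 - a_N q)`, which is unbounded because `a_N q > 1`.
-/

open scoped ENNReal Real
open Complex MeasureTheory Set Filter Topology Asymptotics

lemma norm_ofReal_mul_exp_mul_I {r : ℝ} (hr : 0 ≤ r) (θ : ℝ) :
    ‖(r : ℂ) * exp (θ * I)‖ = r := by
  rw [norm_mul, norm_exp_ofReal_mul_I, norm_real, Real.norm_of_nonneg hr, mul_one]

lemma one_sub_le_norm_one_sub_ofReal_mul_exp {r : ℝ} (hr : 0 ≤ r) (θ : ℝ) :
    1 - r ≤ ‖1 - (r : ℂ) * exp (θ * I)‖ := by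
  simpa [norm_ofReal_mul_exp_mul_I hr, abs_of_nonneg hr] using
    norm_sub_norm_le (1 : ℂ) (r * exp (θ * I))

lemma norm_one_sub_ofReal_mul_exp_le {r : ℝ} (hr₀ : 0 ≤ r) (hr₁ : r ≤ 1) (θ : ℝ) :
    ‖1 - (r : ℂ) * exp (θ * I)‖ ≤ 1 - r + |θ| := by
  have hθ : ‖exp (θ * I) - 1‖ ≤ |θ| := by
    simpa [mul_comm] using Real.norm_exp_I_mul_ofReal_sub_one_le (x := θ)
  calc ‖1 - (r : ℂ) * exp (θ * I)‖ = ‖((1 - r : ℝ) : ℂ) - r * (exp (θ * I) - 1)‖ := by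
        push_cast; ring_nf
    _ ≤ 1 - r + r * |θ| := by
        refine (norm_sub_le _ _).trans (add_le_add ?_ ?_)
        · rw [norm_real, Real.norm_of_nonneg (by linarith)]
        · rw [norm_mul, norm_real, Real.norm_of_nonneg hr₀]
          exact mul_le_mul_of_nonneg_left hθ hr₀
    _ ≤ 1 - r + |θ| := by nlinarith [abs_nonneg θ]

lemma min_div_pi_le_sin_half {θ : ℝ} (h₀ : 0 ≤ θ) (h₁ : θ ≤ 2 * π) :
    min θ (2 * π - θ) / π ≤ Real.sin (θ / 2) := by
  rcases le_total θ π with hθ | hθ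
  · calc min θ (2 * π - θ) / π ≤ θ / π := by gcongr; exact min_le_left _ _
      _ = 2 / π * (θ / 2) := by ring
      _ ≤ Real.sin (θ / 2) := Real.mul_le_sin (by linarith) (by linarith)
  · calc min θ (2 * π - θ) / π ≤ (2 * π - θ) / π := by gcongr; exact min_le_right _ _
      _ = 2 / π * ((2 * π - θ) / 2) := by ring
      _ ≤ Real.sin ((2 * π - θ) / 2) := Real.mul_le_sin (by linarith) (by linarith)
      _ = Real.sin (θ / 2) := by rw [show (2 * π - θ) / 2 = π - θ / 2 by ring, Real.sin_pi_sub]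

lemma min_div_pi_le_norm_one_sub_ofReal_mul_exp {r θ : ℝ} (hr₀ : 0 ≤ r) (hr₁ : r ≤ 1)
    (hθ₀ : 0 ≤ θ) (hθ₁ : θ ≤ 2 * π) :
    min θ (2 * π - θ) / π ≤ ‖1 - (r : ℂ) * exp (θ * I)‖ := by
  have hsin : 2 * Real.sin (θ / 2) ≤ ‖1 - exp (θ * I)‖ := by
    rw [norm_sub_rev, mul_comm (θ : ℂ), norm_exp_I_mul_ofReal_sub_one, Real.norm_eq_abs]
    exact le_abs_self _
  have hsplit : ‖1 - exp (θ * I)‖ ≤ 2 * ‖1 - (r : ℂ) * exp (θ * I)‖ := by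
    calc ‖1 - exp (θ * I)‖
        = ‖(1 - (r : ℂ) * exp (θ * I)) - ((1 - r : ℝ) : ℂ) * exp (θ * I)‖ := by
          push_cast; ring_nf
      _ ≤ ‖1 - (r : ℂ) * exp (θ * I)‖ + (1 - r) := by
          refine (norm_sub_le _ _).trans_eq ?_
          rw [norm_ofReal_mul_exp_mul_I (by linarith)]
      _ ≤ 2 * ‖1 - (r : ℂ) * exp (θ * I)‖ := by
          linarith [one_sub_le_norm_one_sub_ofReal_mul_exp hr₀ θ]
  linarith [min_div_pi_le_sin_half hθ₀ hθ₁]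

lemma rpow_neg_norm_one_sub_ofReal_mul_exp_le {r θ s : ℝ} (hr₀ : 0 ≤ r) (hr₁ : r ≤ 1)
    (hθ : θ ∈ Ioo 0 (2 * π)) (hs : 0 ≤ s) :
    ‖1 - (r : ℂ) * exp (θ * I)‖ ^ (-s) ≤ π ^ s * (θ ^ (-s) + (2 * π - θ) ^ (-s)) := by
  obtain ⟨hθ₀, hθ₁⟩ := hθ
  have hmin : 0 < min θ (2 * π - θ) := lt_min hθ₀ (by linarith)
  calc ‖1 - (r : ℂ) * exp (θ * I)‖ ^ (-s) ≤ (min θ (2 * π - θ) / π) ^ (-s) :=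
        Real.rpow_le_rpow_of_nonpos (by positivity)
          (min_div_pi_le_norm_one_sub_ofReal_mul_exp hr₀ hr₁ hθ₀.le hθ₁.le) (by linarith)
    _ = π ^ s * min θ (2 * π - θ) ^ (-s) := by
        rw [Real.div_rpow hmin.le Real.pi_pos.le, Real.rpow_neg Real.pi_pos.le, div_inv_eq_mul,
          mul_comm]
    _ ≤ π ^ s * (θ ^ (-s) + (2 * π - θ) ^ (-s)) := by
        gcongr
        rcases min_cases θ (2 * π - θ) with ⟨h, -⟩ | ⟨h, -⟩ <;> rw [h]
        · exact le_add_of_nonneg_right (Real.rpow_nonneg (by linarith) _)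
        · exact le_add_of_nonneg_left (Real.rpow_nonneg hθ₀.le _)

lemma integrableOn_rpow_neg_add_rpow_neg_sub {s : ℝ} (hs : s < 1) (b : ℝ) :
    IntegrableOn (fun θ : ℝ => θ ^ (-s) + (b - θ) ^ (-s)) (Ioc 0 b) := by
  have h : IntervalIntegrable (fun θ : ℝ => θ ^ (-s)) volume 0 b :=
    intervalIntegral.intervalIntegrable_rpow' (by linarith)
  have h' : IntervalIntegrable (fun θ : ℝ => (b - θ) ^ (-s)) volume 0 b := by
    simpa using (h.comp_sub_left b).symm
  exact (h.add h').1

lemma iSup_hardyArcIntegral_lt_top_of_le {f : ℂ → ℂ} {e a b : ℝ} {G : ℝ → ℝ}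
    (hG : IntegrableOn G (Ioc a b))
    (hfG : ∀ r ∈ Ioo (0 : ℝ) 1, ∀ θ ∈ Ioo a b, ‖f ((r : ℂ) * exp (θ * I))‖ ^ e ≤ G θ) :
    ⨆ r ∈ Ioo (0 : ℝ) 1, hardyArcIntegral f e a b r < ⊤ := by
  refine lt_of_le_of_lt (iSup₂_le fun r hr => ?_) hG.lintegral_lt_top
  rw [hardyArcIntegral, setLIntegral_congr Ioo_ae_eq_Ioc.symm,
    setLIntegral_congr (Ioo_ae_eq_Ioc (a := a) (b := b)).symm]
  exact setLIntegral_mono' measurableSet_Ioo fun θ hθ =>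
    ENNReal.ofReal_le_ofReal (hfG r hr θ hθ)

lemma iSup_hardyArcIntegral_lt_top {f : ℂ → ℂ} {C a e : ℝ} (ha : 0 ≤ a) (he : 0 ≤ e)
    (hae : a * e < 1) (hf : ∀ z : ℂ, ‖z‖ < 1 → ‖f z‖ ≤ C * ‖1 - z‖ ^ (-a)) :
    ⨆ r ∈ Ioo (0 : ℝ) 1, hardyArcIntegral f e 0 (2 * π) r < ⊤ := by
  refine iSup_hardyArcIntegral_lt_top_of_le
    ((integrableOn_rpow_neg_add_rpow_neg_sub hae (2 * π)).const_mul (C ^ e * π ^ (a * e)))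
    fun r hr θ hθ => ?_
  set z := (r : ℂ) * exp (θ * I)
  have hz : ‖z‖ < 1 := by rw [norm_ofReal_mul_exp_mul_I hr.1.le]; exact hr.2
  have hz₀ : 0 < ‖1 - z‖ := by
    refine norm_pos_iff.2 (sub_ne_zero.2 fun h => ?_)
    simp [← h] at hz
  have hC : 0 ≤ C := nonneg_of_mul_nonneg_left ((norm_nonneg _).trans (hf z hz))
    (Real.rpow_pos_of_pos hz₀ _)
  calc ‖f z‖ ^ e ≤ (C * ‖1 - z‖ ^ (-a)) ^ e := Real.rpow_le_rpow (norm_nonneg _) (hf z hz) he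
    _ = C ^ e * ‖1 - z‖ ^ (-(a * e)) := by
        rw [Real.mul_rpow hC (Real.rpow_nonneg hz₀.le _), ← Real.rpow_mul hz₀.le, neg_mul]
    _ ≤ C ^ e * (π ^ (a * e) * (θ ^ (-(a * e)) + (2 * π - θ) ^ (-(a * e)))) := by
        gcongr
        exact rpow_neg_norm_one_sub_ofReal_mul_exp_le hr.1.le hr.2.le hθ (by positivity)
    _ = _ := by ring

lemma ofReal_mul_rpow_le_hardyArcIntegral {f : ℂ → ℂ} {c a e δ ε : ℝ} (hc : 0 ≤ c) (ha : 0 ≤ a)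
    (he : 0 ≤ e) (hf : ∀ w : ℂ, w ≠ 0 → ‖w‖ < δ → c * ‖w‖ ^ (-a) ≤ ‖f (1 - w)‖)
    (hε₀ : 0 < ε) (hε₁ : ε < 1) (hεδ : 2 * ε < δ) :
    ENNReal.ofReal (c ^ e * 2 ^ (-(a * e)) * ε ^ (1 - a * e)) ≤
      hardyArcIntegral f e 0 (2 * π) (1 - ε) := by
  have hlow : ∀ θ ∈ Ioc 0 ε, c ^ e * (2 * ε) ^ (-(a * e)) ≤
      ‖f (((1 - ε : ℝ) : ℂ) * exp (θ * I))‖ ^ e := by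
    rintro θ ⟨hθ₀, hθε⟩
    set w := 1 - ((1 - ε : ℝ) : ℂ) * exp (θ * I)
    have hw₀ : ε ≤ ‖w‖ := by
      simpa only [sub_sub_cancel] using
        one_sub_le_norm_one_sub_ofReal_mul_exp (r := 1 - ε) (by linarith) θ
    have hw₁ : ‖w‖ ≤ 2 * ε := by
      have := norm_one_sub_ofReal_mul_exp_le (r := 1 - ε) (by linarith) (by linarith) θ
      rw [abs_of_pos hθ₀] at this
      linarith
    have hbound := hf w (norm_pos_iff.1 (hε₀.trans_le hw₀)) (by linarith)
    rw [sub_sub_cancel] at hbound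
    calc c ^ e * (2 * ε) ^ (-(a * e)) = (c * (2 * ε) ^ (-a)) ^ e := by
          rw [Real.mul_rpow hc (by positivity), ← Real.rpow_mul (by positivity), neg_mul]
      _ ≤ ‖f (((1 - ε : ℝ) : ℂ) * exp (θ * I))‖ ^ e := by
          refine Real.rpow_le_rpow (by positivity) (le_trans ?_ hbound) he
          exact mul_le_mul_of_nonneg_left
            (Real.rpow_le_rpow_of_nonpos (hε₀.trans_le hw₀) hw₁ (by linarith)) hc
  calc ENNReal.ofReal (c ^ e * 2 ^ (-(a * e)) * ε ^ (1 - a * e))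
      = ∫⁻ _ in Ioc 0 ε, ENNReal.ofReal (c ^ e * (2 * ε) ^ (-(a * e))) := by
        rw [setLIntegral_const, Real.volume_Ioc, sub_zero, ← ENNReal.ofReal_mul (by positivity),
          Real.mul_rpow zero_le_two hε₀.le, sub_eq_neg_add, Real.rpow_add_one hε₀.ne']
        ring_nf
    _ ≤ ∫⁻ θ in Ioc 0 ε, ENNReal.ofReal (‖f (((1 - ε : ℝ) : ℂ) * exp (θ * I))‖ ^ e) :=
        setLIntegral_mono' measurableSet_Ioc fun θ hθ => ENNReal.ofReal_le_ofReal (hlow θ hθ)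
    _ ≤ hardyArcIntegral f e 0 (2 * π) (1 - ε) :=
        lintegral_mono_set (Ioc_subset_Ioc_right (by linarith [Real.pi_gt_three]))

lemma iSup_hardyArcIntegral_eq_top {f : ℂ → ℂ} {c a e : ℝ} (hc : 0 < c) (he : 0 < e)
    (hae : 1 < a * e) (hf : ∀ᶠ w in 𝓝[≠] (0 : ℂ), c * ‖w‖ ^ (-a) ≤ ‖f (1 - w)‖) :
    ⨆ r ∈ Ioo (0 : ℝ) 1, hardyArcIntegral f e 0 (2 * π) r = ⊤ := by
  have ha : 0 < a := pos_of_mul_pos_left (by linarith) he.le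
  obtain ⟨δ, hδ, hfδ⟩ := Metric.eventually_nhds_iff.1 (eventually_nhdsWithin_iff.1 hf)
  have hmass :
      Tendsto (fun ε : ℝ => c ^ e * 2 ^ (-(a * e)) * ε ^ (1 - a * e)) (𝓝[>] 0) atTop :=
    (tendsto_rpow_neg_nhdsGT_zero (by linarith)).const_mul_atTop (by positivity)
  refine ENNReal.eq_top_of_forall_nnreal_le fun M => ?_
  obtain ⟨ε, hM, hε₀, hε⟩ := ((hmass.eventually_ge_atTop M).and
    (Ioo_mem_nhdsGT (lt_min (half_pos hδ) one_pos))).exists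
  obtain ⟨hεδ, hε₁⟩ := lt_min_iff.1 hε
  refine le_iSup₂_of_le (1 - ε) ⟨by linarith, by linarith⟩ ?_
  refine (ENNReal.ofReal_coe_nnreal.symm.trans_le (ENNReal.ofReal_le_ofReal hM)).trans ?_
  exact ofReal_mul_rpow_le_hardyArcIntegral hc.le ha.le he.le
    (fun w hw₀ hwδ => hfδ (by simpa using hwδ) hw₀) hε₀ hε₁ (by linarith)

lemma isLittleO_rpow_neg_nhdsGT_zero {a b : ℝ} (hab : a < b) :
    (fun t : ℝ => t ^ (-a)) =o[𝓝[>] 0] fun t => t ^ (-b) := by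
  have h : Tendsto (fun t : ℝ => t ^ (b - a)) (𝓝[>] 0) (𝓝 0) := by
    have := (Real.continuousAt_rpow_const 0 (b - a) (Or.inr (sub_pos.2 hab).le)).tendsto
    rw [Real.zero_rpow (sub_pos.2 hab).ne'] at this
    exact this.mono_left nhdsWithin_le_nhds
  refine (((isLittleO_one_iff ℝ).2 h).mul_isBigO (isBigO_refl (fun t : ℝ => t ^ (-b)) _))
    |>.congr' ?_ (Eventually.of_forall fun _ => one_mul _)
  filter_upwards [self_mem_nhdsWithin] with t ht
  rw [← Real.rpow_add ht]
  ring_nf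

lemma norm_sum_mul_cpow_neg_le {a : ℕ → ℝ} {N : ℕ} (ha : ∀ n ≤ N, a n ≤ a N) (lam : ℕ → ℂ)
    {w : ℂ} (hw₀ : w ≠ 0) (hw₂ : ‖w‖ ≤ 2) :
    ‖∑ n ∈ Finset.range (N + 1), lam n * w ^ ((-a n : ℝ) : ℂ)‖ ≤
      (∑ n ∈ Finset.range (N + 1), ‖lam n‖ * 2 ^ (a N - a n)) * ‖w‖ ^ (-a N) := by
  have hw : 0 < ‖w‖ := norm_pos_iff.2 hw₀
  rw [Finset.sum_mul]
  refine (norm_sum_le _ _).trans (Finset.sum_le_sum fun n hn => ?_)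
  rw [norm_mul, norm_cpow_real, mul_assoc]
  gcongr
  calc ‖w‖ ^ (-a n) = ‖w‖ ^ (a N - a n) * ‖w‖ ^ (-a N) := by
        rw [← Real.rpow_add hw]; ring_nf
    _ ≤ 2 ^ (a N - a n) * ‖w‖ ^ (-a N) := by
        gcongr
        exact sub_nonneg.2 (ha n (Nat.lt_succ_iff.1 (Finset.mem_range.1 hn)))

lemma eventually_le_norm_sum_mul_cpow_neg {a : ℕ → ℝ} {N : ℕ} (ha : ∀ n < N, a n < a N)
    {lam : ℕ → ℂ} (hlam : lam N ≠ 0) :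
    ∀ᶠ w in 𝓝[≠] (0 : ℂ), ‖lam N‖ / 2 * ‖w‖ ^ (-a N) ≤
      ‖∑ n ∈ Finset.range (N + 1), lam n * w ^ ((-a n : ℝ) : ℂ)‖ := by
  have hrest : (fun w : ℂ => ∑ n ∈ Finset.range N, lam n * w ^ ((-a n : ℝ) : ℂ))
      =o[𝓝[≠] 0] fun w => ‖w‖ ^ (-a N) := by
    refine IsLittleO.fun_sum fun n hn => ?_
    have h : (fun w : ℂ => ‖w ^ ((-a n : ℝ) : ℂ)‖) =o[𝓝[≠] 0] fun w => ‖w‖ ^ (-a N) := by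
      simpa only [norm_cpow_real, Function.comp_def] using
        (isLittleO_rpow_neg_nhdsGT_zero (ha n (Finset.mem_range.1 hn))).comp_tendsto
          tendsto_norm_nhdsNE_zero
    exact h.of_norm_left.const_mul_left (lam n)
  filter_upwards [hrest.bound (half_pos (norm_pos_iff.2 hlam))] with w hw
  rw [Real.norm_of_nonneg (by positivity)] at hw
  have hlead : ‖lam N * w ^ ((-a N : ℝ) : ℂ)‖ = ‖lam N‖ * ‖w‖ ^ (-a N) := by
    rw [norm_mul, norm_cpow_real]
  rw [Finset.sum_range_succ, add_comm]
  linarith [norm_le_add_norm_add (lam N * w ^ ((-a N : ℝ) : ℂ))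
    (∑ n ∈ Finset.range N, lam n * w ^ ((-a n : ℝ) : ℂ))]

lemma differentiableOn_one_sub_cpow (s : ℂ) :
    DifferentiableOn ℂ (fun z : ℂ => (1 - z) ^ s) (Metric.ball 0 1) := by
  intro z hz
  have hre : 0 < (1 - z).re := by
    have := (re_le_norm z).trans_lt (mem_ball_zero_iff.1 hz)
    rw [sub_re, one_re]; linarith
  exact ((differentiableAt_const 1).sub differentiableAt_id).cpow (differentiableAt_const s)
    (Or.inl hre) |>.differentiableWithinAt

/-- Let `0 < p < q < ∞`. There is a sequence of functions `g n`,
holomorphic on the open unit disc, such that every finite linear combination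
`L = λ₀ g 0 + ⋯ + λ_N g N` with `λ_N ≠ 0` belongs to `H^p` and not to `H^q`. -/
theorem lineability_Hp_minus_Hq (p q : ℝ) (hp : 0 < p) (hpq : p < q) :
    ∃ g : ℕ → ℂ → ℂ,
      (∀ n, DifferentiableOn ℂ (g n) (Metric.ball (0 : ℂ) 1)) ∧
      ∀ (N : ℕ) (lam : ℕ → ℂ), lam N ≠ 0 →
        (⨆ r ∈ Ioo (0 : ℝ) 1,
            hardyArcIntegral (fun z => ∑ n ∈ Finset.range (N + 1), lam n * g n z)
              p 0 (2 * π) r) < ⊤ ∧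
        (⨆ r ∈ Ioo (0 : ℝ) 1,
            hardyArcIntegral (fun z => ∑ n ∈ Finset.range (N + 1), lam n * g n z)
              q 0 (2 * π) r) = ⊤ := by
  obtain ⟨a, ha_mono, ha_mem, -⟩ :=
    exists_seq_strictMono_tendsto' (one_div_lt_one_div_of_lt hp hpq)
  have ha_pos : ∀ n, 0 < a n := fun n => (one_div_pos.2 (hp.trans hpq)).trans (ha_mem n).1
  refine ⟨fun n z => (1 - z) ^ ((-a n : ℝ) : ℂ), fun n => differentiableOn_one_sub_cpow _,
    fun N lam hlam => ⟨?_, ?_⟩⟩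
  · have hbound (z : ℂ) (hz : ‖z‖ < 1) :=
      norm_sum_mul_cpow_neg_le (N := N) (fun n hn => ha_mono.monotone hn) lam (w := 1 - z)
        (sub_ne_zero.2 fun h => by simp [← h] at hz)
        ((norm_sub_le _ _).trans (by rw [norm_one]; linarith))
    exact iSup_hardyArcIntegral_lt_top (ha_pos N).le hp.le
      ((lt_div_iff₀ hp).1 (by simpa using (ha_mem N).2)) hbound
  · have hq : 0 < q := hp.trans hpq
    refine iSup_hardyArcIntegral_eq_top (half_pos (norm_pos_iff.2 hlam)) hq
      ((div_lt_iff₀ hq).1 (by simpa using (ha_mem N).1)) ?_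
    simpa only [sub_sub_cancel] using
      eventually_le_norm_sum_mul_cpow_neg (fun n hn => ha_mono hn) hlam
end

section
/- Let 0 < p < ∞. Then there exists a function f : ℂ → ℂ holomorphic on the open unit disc D = {z ∈ ℂ : |z| < 1} such that f belongs to H^p, i.e. sup_{0<r<1} ∫_0^{2π} |f(r e^{iθ})|^p dθ < ∞, and for every real q with p < q < ∞ and all real numbers a < b one has sup_{0<r<1} ∫_a^b |f(r e^{iθ})|^q dθ = ∞; that is, f belongs to no localized Hardy space H^q_{[a,b]}(D) with q > p. -/
/-!
Put `g(z) = ∑ₙ 2⁻ⁿ cos(γₙπ/2) (1 - e^{-iθₙ} z)^{-γₙ}` with `γₙ = n/(n+1)` and `θₙ` running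
through every rational number infinitely often, and `f = g^{1/p}`, so that `|f|^q = |g|^{q/p}`.
Every summand has argument in `[-γₙπ/2, γₙπ/2]`, hence `|g| ≤ Re H` for
`H(z) = ∑ₙ 2⁻ⁿ (1 - e^{-iθₙ} z)^{-γₙ}`, and the mean value property for `H` bounds
`∫ |f(re^{iθ})|^p dθ = ∫ |g(re^{iθ})| dθ` by `2π Re H(0) = 4π`.
Conversely all summands have positive real part, so `|g|` dominates each single summand up to
a constant. Given `p < q` and an arc `(a, b)`, pick `n` with `θₙ ∈ (a, b)` and `γₙ q/p > 1`:
on the arc of length `1 - r` next to `θₙ`, `|f(re^{iθ})|^q ≳ (1 - r)^{-γₙ q/p}`, so the integral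
over `(a, b)` is at least a multiple of `(1 - r)^{1 - γₙ q/p}`, which is unbounded as `r → 1`.
-/

open scoped ENNReal Real
open Complex MeasureTheory Set

open Filter Topology Metric

theorem cos_mul_norm_cpow_le_re {w : ℂ} (hw : 0 ≤ w.re) {t : ℝ} (ht : |t| ≤ 1) :
    Real.cos (t * (π / 2)) * ‖w ^ (t : ℂ)‖ ≤ (w ^ (t : ℂ)).re := by
  rw [cpow_ofReal_re, norm_cpow_real, mul_comm]
  refine mul_le_mul_of_nonneg_left ?_ (by positivity)
  have harg : |arg w| ≤ π / 2 := abs_arg_le_pi_div_two_iff.2 hw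
  have hπ : 0 < π / 2 := by positivity
  rw [← Real.cos_abs (t * _), ← Real.cos_abs (arg w * t), abs_mul, abs_mul, abs_of_pos hπ]
  apply Real.cos_le_cos_of_nonneg_of_le_pi (by positivity)
  · nlinarith [abs_nonneg t]
  · rw [mul_comm]; exact mul_le_mul_of_nonneg_left harg (abs_nonneg t)

theorem cos_mul_pi_div_two_mem_Icc {γ : ℝ} (hγ : γ ∈ Icc 0 1) : Real.cos (γ * (π / 2)) ∈ Icc 0 1 :=
  ⟨Real.cos_nonneg_of_mem_Icc ⟨by nlinarith [hγ.1, Real.pi_pos], by nlinarith [hγ.2, Real.pi_pos]⟩,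
    Real.cos_le_one _⟩

theorem cos_mul_pi_div_two_pos {γ : ℝ} (hγ : |γ| < 1) : 0 < Real.cos (γ * (π / 2)) := by
  obtain ⟨h0, h1⟩ := abs_lt.1 hγ
  exact Real.cos_pos_of_mem_Ioo ⟨by nlinarith [Real.pi_pos], by nlinarith [Real.pi_pos]⟩

theorem norm_one_sub_exp_mul_le {r : ℝ} (hr0 : 0 ≤ r) (hr1 : r ≤ 1) (v θ : ℝ) :
    ‖1 - exp (-(v * I)) * (r * exp (θ * I))‖ ≤ 1 - r + |θ - v| := by
  have hexp : 1 - exp (-(v * I)) * (r * exp (θ * I)) =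
      ((1 - r : ℝ) : ℂ) - r * (exp (I * (θ - v : ℝ)) - 1) := by
    rw [mul_left_comm, ← exp_add]; push_cast; ring_nf
  rw [hexp]
  refine (norm_sub_le _ _).trans ?_
  rw [norm_real, norm_mul, norm_real, Real.norm_of_nonneg (sub_nonneg.2 hr1),
    Real.norm_of_nonneg hr0]
  have := Real.norm_exp_I_mul_ofReal_sub_one_le (x := θ - v)
  rw [Real.norm_eq_abs] at this
  nlinarith [abs_nonneg (θ - v), norm_nonneg (exp (I * (θ - v : ℝ)) - 1)]

noncomputable def powerKernel (ζ : ℂ) (γ : ℝ) (z : ℂ) : ℂ := (1 - ζ * z) ^ ((-γ : ℝ) : ℂ)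

section PowerKernel

variable {ζ z : ℂ} {γ : ℝ}

theorem re_one_sub_mul_pos (hζ : ‖ζ‖ ≤ 1) (hz : ‖z‖ < 1) : 0 < (1 - ζ * z).re := by
  have : (ζ * z).re < 1 := (re_le_norm _).trans_lt <| by
    rw [norm_mul]; exact (mul_le_of_le_one_left (norm_nonneg z) hζ).trans_lt hz
  rw [sub_re, one_re]; linarith

theorem one_sub_mul_ne_zero (hζ : ‖ζ‖ ≤ 1) (hz : ‖z‖ < 1) : 1 - ζ * z ≠ 0 := fun h =>
  (re_one_sub_mul_pos hζ hz).ne' (by rw [h, zero_re])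

theorem one_sub_norm_le_norm_one_sub_mul (hζ : ‖ζ‖ ≤ 1) : 1 - ‖z‖ ≤ ‖1 - ζ * z‖ :=
  calc 1 - ‖z‖ ≤ 1 - ‖ζ * z‖ := by
        rw [norm_mul]; gcongr; exact mul_le_of_le_one_left (norm_nonneg z) hζ
    _ ≤ ‖1 - ζ * z‖ := by simpa using norm_sub_norm_le (1 : ℂ) (ζ * z)

theorem norm_powerKernel : ‖powerKernel ζ γ z‖ = ‖1 - ζ * z‖ ^ (-γ) := norm_cpow_real _ _

theorem norm_powerKernel_le (hζ : ‖ζ‖ ≤ 1) (hz : ‖z‖ < 1) (hγ : γ ∈ Icc 0 1) :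
    ‖powerKernel ζ γ z‖ ≤ (1 - ‖z‖)⁻¹ := by
  have hδ : 0 < 1 - ‖z‖ := sub_pos.2 hz
  calc ‖powerKernel ζ γ z‖ = ‖1 - ζ * z‖ ^ (-γ) := norm_powerKernel
    _ ≤ (1 - ‖z‖) ^ (-γ) :=
        Real.rpow_le_rpow_of_nonpos hδ (one_sub_norm_le_norm_one_sub_mul hζ) (by linarith [hγ.1])
    _ ≤ (1 - ‖z‖) ^ (-1 : ℝ) :=
        Real.rpow_le_rpow_of_exponent_ge hδ (by linarith [norm_nonneg z]) (by linarith [hγ.2])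
    _ = (1 - ‖z‖)⁻¹ := Real.rpow_neg_one _

theorem cos_mul_norm_powerKernel_le_re (hζ : ‖ζ‖ ≤ 1) (hz : ‖z‖ < 1) (hγ : |γ| ≤ 1) :
    Real.cos (γ * (π / 2)) * ‖powerKernel ζ γ z‖ ≤ (powerKernel ζ γ z).re := by
  have h := cos_mul_norm_cpow_le_re (re_one_sub_mul_pos hζ hz).le (t := -γ) (by rwa [abs_neg])
  rwa [neg_mul, Real.cos_neg] at h

theorem re_powerKernel_nonneg (hζ : ‖ζ‖ ≤ 1) (hz : ‖z‖ < 1) (hγ : γ ∈ Icc 0 1) :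
    0 ≤ (powerKernel ζ γ z).re :=
  (mul_nonneg (cos_mul_pi_div_two_mem_Icc hγ).1 (norm_nonneg _)).trans
    (cos_mul_norm_powerKernel_le_re hζ hz ((abs_of_nonneg hγ.1).trans_le hγ.2))

theorem differentiableAt_powerKernel (hζ : ‖ζ‖ ≤ 1) (hz : ‖z‖ < 1) :
    DifferentiableAt ℂ (powerKernel ζ γ) z :=
  DifferentiableAt.cpow_const (by fun_prop) (Or.inl (re_one_sub_mul_pos hζ hz))

@[simp]
theorem powerKernel_zero : powerKernel ζ γ 0 = 1 := by simp [powerKernel]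

end PowerKernel

theorem hardyArcIntegral_cpow_inv (g : ℂ → ℂ) (p e a b r : ℝ) :
    hardyArcIntegral (fun z => g z ^ ((p⁻¹ : ℝ) : ℂ)) e a b r =
      hardyArcIntegral g (e / p) a b r := by
  simp only [hardyArcIntegral, norm_cpow_real, ← Real.rpow_mul (norm_nonneg _), inv_mul_eq_div]

theorem lintegral_ofReal_re_circleMap_eq {H : ℂ → ℂ} {r : ℝ} (hr : r ≠ 0)
    (hH : DiffContOnCl ℂ H (ball 0 |r|))
    (hre : ∀ θ, 0 ≤ (H (circleMap 0 r θ)).re) :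
    ∫⁻ θ in Ioc 0 (2 * π), ENNReal.ofReal (H (circleMap 0 r θ)).re =
      ENNReal.ofReal (2 * π * (H 0).re) := by
  have hcont : ContinuousOn H (sphere 0 |r|) :=
    hH.continuousOn.mono <| by
      rw [closure_ball (0 : ℂ) (abs_ne_zero.2 hr)]; exact sphere_subset_closedBall
  have hmean : Real.circleAverage (fun z => (H z).re) 0 r = (H 0).re := by
    rw [← hH.circleAverage]; exact reCLM.circleAverage_comp_comm hcont.circleIntegrable'
  have hint : IntervalIntegrable (fun θ => (H (circleMap 0 r θ)).re) volume 0 (2 * π) :=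
    (continuous_re.comp_continuousOn hcont).circleIntegrable'
  rw [← ofReal_integral_eq_lintegral_ofReal
      ((intervalIntegrable_iff_integrableOn_Ioc_of_le (by positivity)).1 hint)
      (Eventually.of_forall hre),
    ← intervalIntegral.integral_of_le (by positivity), ← hmean, Real.circleAverage_def,
    smul_eq_mul, mul_inv_cancel_left₀ (by positivity)]

theorem iSup_hardyArcIntegral_eq_top_of_le {F : ℂ → ℂ} {e a b v C β : ℝ} (hav : a < v)
    (hvb : v < b) (hC : 0 < C) (hβ : 1 < β)
    (hF : ∀ r ∈ Ioo (0 : ℝ) 1, ∀ θ ∈ Ioc v (v + (1 - r)),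
      C * (1 - r) ^ (-β) ≤ ‖F (r * exp (θ * I))‖ ^ e) :
    ⨆ r ∈ Ioo (0 : ℝ) 1, hardyArcIntegral F e a b r = ⊤ := by
  have hlow : ∀ ε ∈ Ioo 0 (min 1 (b - v)),
      ENNReal.ofReal (C * ε ^ (1 - β)) ≤ ⨆ r ∈ Ioo (0 : ℝ) 1, hardyArcIntegral F e a b r := by
    rintro ε ⟨hε0, hε⟩
    have hr : 1 - ε ∈ Ioo (0 : ℝ) 1 := ⟨by linarith [min_le_left 1 (b - v)], by linarith⟩
    have hmass : C * ε ^ (1 - β) = C * ε ^ (-β) * ε := by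
      rw [mul_assoc, ← Real.rpow_add_one hε0.ne', neg_add_eq_sub]
    refine le_trans ?_ (le_iSup₂ (f := fun r _ => hardyArcIntegral F e a b r) (1 - ε) hr)
    calc ENNReal.ofReal (C * ε ^ (1 - β))
        = ∫⁻ _ in Ioc v (v + ε), ENNReal.ofReal (C * ε ^ (-β)) := by
          rw [setLIntegral_const, Real.volume_Ioc, add_sub_cancel_left, hmass,
            ENNReal.ofReal_mul (by positivity)]
      _ ≤ ∫⁻ θ in Ioc v (v + ε), ENNReal.ofReal (‖F ((1 - ε : ℝ) * exp (θ * I))‖ ^ e) :=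
          setLIntegral_mono' measurableSet_Ioc fun θ hθ => ENNReal.ofReal_le_ofReal <| by
            simpa using hF (1 - ε) hr θ (by rwa [sub_sub_cancel])
      _ ≤ hardyArcIntegral F e a b (1 - ε) :=
          lintegral_mono_set (Ioc_subset_Ioc hav.le (by linarith [min_le_right 1 (b - v)]))
  refine ENNReal.eq_top_of_forall_nnreal_le fun M => ?_
  have hlim : Tendsto (fun ε : ℝ => C * ε ^ (1 - β)) (𝓝[>] 0) atTop :=
    (tendsto_rpow_neg_nhdsGT_zero (by linarith)).const_mul_atTop hC
  obtain ⟨ε, hεM, hε⟩ := ((hlim.eventually_ge_atTop M).and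
    (Ioo_mem_nhdsGT (lt_min one_pos (sub_pos.2 hvb)))).exists
  exact ENNReal.ofReal_coe_nnreal ▸ (ENNReal.ofReal_le_ofReal hεM).trans (hlow ε hε)

noncomputable def kernelSeries (ζ : ℕ → ℂ) (γ w : ℕ → ℝ) (z : ℂ) : ℂ :=
  ∑' n, (w n : ℂ) * powerKernel (ζ n) (γ n) z

noncomputable def cosWeight (γ u : ℕ → ℝ) (n : ℕ) : ℝ := Real.cos (γ n * (π / 2)) * u n

section KernelSeries

variable {ζ : ℕ → ℂ} {γ w u : ℕ → ℝ} {z : ℂ}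

theorem cosWeight_nonneg (hγ : ∀ n, γ n ∈ Icc 0 1) (hu0 : 0 ≤ u) : 0 ≤ cosWeight γ u :=
  fun n => mul_nonneg (cos_mul_pi_div_two_mem_Icc (hγ n)).1 (hu0 n)

theorem summable_cosWeight (hγ : ∀ n, γ n ∈ Icc 0 1) (hu : Summable u) (hu0 : 0 ≤ u) :
    Summable (cosWeight γ u) :=
  hu.of_nonneg_of_le (cosWeight_nonneg hγ hu0)
    fun n => mul_le_of_le_one_left (hu0 n) (cos_mul_pi_div_two_mem_Icc (hγ n)).2

theorem norm_weight_mul_powerKernel_le (hζ : ∀ n, ‖ζ n‖ ≤ 1) (hγ : ∀ n, γ n ∈ Icc 0 1)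
    (hw0 : 0 ≤ w) (hz : ‖z‖ < 1) (n : ℕ) :
    ‖(w n : ℂ) * powerKernel (ζ n) (γ n) z‖ ≤ w n * (1 - ‖z‖)⁻¹ := by
  rw [norm_mul, norm_real, Real.norm_of_nonneg (hw0 n)]
  exact mul_le_mul_of_nonneg_left (norm_powerKernel_le (hζ n) hz (hγ n)) (hw0 n)

theorem summable_weight_mul_powerKernel (hζ : ∀ n, ‖ζ n‖ ≤ 1) (hγ : ∀ n, γ n ∈ Icc 0 1)
    (hw : Summable w) (hw0 : 0 ≤ w) (hz : ‖z‖ < 1) :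
    Summable fun n => (w n : ℂ) * powerKernel (ζ n) (γ n) z :=
  .of_norm_bounded (hw.mul_right _) (norm_weight_mul_powerKernel_le hζ hγ hw0 hz)

theorem differentiableOn_kernelSeries (hζ : ∀ n, ‖ζ n‖ ≤ 1) (hγ : ∀ n, γ n ∈ Icc 0 1)
    (hw : Summable w) (hw0 : 0 ≤ w) : DifferentiableOn ℂ (kernelSeries ζ γ w) (ball 0 1) := by
  intro z hz
  obtain ⟨ρ, hzρ, hρ⟩ := exists_between (mem_ball_zero_iff.1 hz)
  have hdiff : DifferentiableOn ℂ (kernelSeries ζ γ w) (ball 0 ρ) := by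
    refine differentiableOn_tsum_of_summable_norm (hw.mul_right (1 - ρ)⁻¹)
      (fun n x hx => ?_) isOpen_ball (fun n x hx => ?_)
    · exact ((differentiableAt_powerKernel (hζ n)
        ((mem_ball_zero_iff.1 hx).trans hρ)).const_mul _).differentiableWithinAt
    · have hx : ‖x‖ < ρ := mem_ball_zero_iff.1 hx
      refine (norm_weight_mul_powerKernel_le hζ hγ hw0 (hx.trans hρ) n).trans ?_
      gcongr
      exact hw0 n
  exact (hdiff.differentiableAt
    (isOpen_ball.mem_nhds (mem_ball_zero_iff.2 hzρ))).differentiableWithinAt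

theorem kernelSeries_zero : kernelSeries ζ γ w 0 = ∑' n, w n := by
  simp [kernelSeries, ofReal_tsum]

theorem hasSum_re_kernelSeries (hζ : ∀ n, ‖ζ n‖ ≤ 1) (hγ : ∀ n, γ n ∈ Icc 0 1)
    (hw : Summable w) (hw0 : 0 ≤ w) (hz : ‖z‖ < 1) :
    HasSum (fun n => w n * (powerKernel (ζ n) (γ n) z).re) (kernelSeries ζ γ w z).re := by
  have h := hasSum_re (summable_weight_mul_powerKernel hζ hγ hw hw0 hz).hasSum
  simp only [re_ofReal_mul] at h
  exact h

theorem weight_mul_re_powerKernel_le_re_kernelSeries (hζ : ∀ n, ‖ζ n‖ ≤ 1)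
    (hγ : ∀ n, γ n ∈ Icc 0 1) (hw : Summable w) (hw0 : 0 ≤ w) (hz : ‖z‖ < 1) (n : ℕ) :
    w n * (powerKernel (ζ n) (γ n) z).re ≤ (kernelSeries ζ γ w z).re :=
  (hasSum_re_kernelSeries hζ hγ hw hw0 hz).summable.le_tsum n
      (fun m _ => mul_nonneg (hw0 m) (re_powerKernel_nonneg (hζ m) hz (hγ m))) |>.trans_eq
    (hasSum_re_kernelSeries hζ hγ hw hw0 hz).tsum_eq

theorem norm_kernelSeries_cosWeight_le_re (hζ : ∀ n, ‖ζ n‖ ≤ 1) (hγ : ∀ n, γ n ∈ Icc 0 1)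
    (hu : Summable u) (hu0 : 0 ≤ u) (hz : ‖z‖ < 1) :
    ‖kernelSeries ζ γ (cosWeight γ u) z‖ ≤ (kernelSeries ζ γ u z).re := by
  have hs := summable_weight_mul_powerKernel hζ hγ (summable_cosWeight hγ hu hu0)
    (cosWeight_nonneg hγ hu0) hz
  have hre := hasSum_re_kernelSeries hζ hγ hu hu0 hz
  refine (norm_tsum_le_tsum_norm hs.norm).trans
    (hre.tsum_eq ▸ hs.norm.tsum_le_tsum (fun n => ?_) hre.summable)
  rw [norm_mul, norm_real, Real.norm_of_nonneg (cosWeight_nonneg hγ hu0 n), cosWeight,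
    mul_comm (Real.cos _), mul_assoc]
  exact mul_le_mul_of_nonneg_left
    (cos_mul_norm_powerKernel_le_re (hζ n) hz ((abs_of_nonneg (hγ n).1).trans_le (hγ n).2)) (hu0 n)

theorem re_kernelSeries_pos (hζ : ∀ n, ‖ζ n‖ ≤ 1) (hγ : ∀ n, γ n ∈ Icc 0 1)
    (hw : Summable w) (hw0 : 0 ≤ w) (hz : ‖z‖ < 1) {n : ℕ} (hγn : γ n < 1) (hwn : 0 < w n) :
    0 < (kernelSeries ζ γ w z).re := by
  have hcos := cos_mul_pi_div_two_pos ((abs_of_nonneg (hγ n).1).trans_lt hγn)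
  have hnorm : 0 < ‖powerKernel (ζ n) (γ n) z‖ := by
    rw [norm_powerKernel]
    exact Real.rpow_pos_of_pos (norm_pos_iff.2 (one_sub_mul_ne_zero (hζ n) hz)) _
  have hre := (mul_pos hcos hnorm).trans_le
    (cos_mul_norm_powerKernel_le_re (hζ n) hz ((abs_of_nonneg (hγ n).1).trans_le (hγ n).2))
  exact (mul_pos hwn hre).trans_le (weight_mul_re_powerKernel_le_re_kernelSeries hζ hγ hw hw0 hz n)

theorem differentiableOn_kernelSeries_cpow (hζ : ∀ n, ‖ζ n‖ ≤ 1)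
    (hγ : ∀ n, γ n ∈ Icc 0 1) (hw : Summable w) (hw0 : 0 ≤ w) {n : ℕ} (hγn : γ n < 1)
    (hwn : 0 < w n) (c : ℂ) :
    DifferentiableOn ℂ (fun z => kernelSeries ζ γ w z ^ c) (ball 0 1) := fun _ hz =>
  ((differentiableOn_kernelSeries hζ hγ hw hw0).differentiableAt (isOpen_ball.mem_nhds hz)
    |>.cpow_const (Or.inl (re_kernelSeries_pos hζ hγ hw hw0 (mem_ball_zero_iff.1 hz) hγn hwn))
    ).differentiableWithinAt

theorem hardyArcIntegral_kernelSeries_cosWeight_le {r : ℝ}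
    (hζ : ∀ n, ‖ζ n‖ ≤ 1) (hγ : ∀ n, γ n ∈ Icc 0 1) (hu : Summable u) (hu0 : 0 ≤ u)
    (hr : r ∈ Ioo 0 1) :
    hardyArcIntegral (kernelSeries ζ γ (cosWeight γ u)) 1 0 (2 * π) r ≤
      ENNReal.ofReal (2 * π * ∑' n, u n) := by
  have hr1 : |r| < 1 := by rw [abs_of_pos hr.1]; exact hr.2
  have hcirc : ∀ θ, ‖circleMap 0 r θ‖ < 1 := fun θ => by rwa [norm_circleMap_zero]
  have hbound := fun θ => norm_kernelSeries_cosWeight_le_re hζ hγ hu hu0 (hcirc θ)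
  calc hardyArcIntegral (kernelSeries ζ γ (cosWeight γ u)) 1 0 (2 * π) r
      ≤ ∫⁻ θ in Ioc 0 (2 * π), ENNReal.ofReal (kernelSeries ζ γ u (circleMap 0 r θ)).re :=
        lintegral_mono fun θ => ENNReal.ofReal_le_ofReal <| by
          rw [Real.rpow_one, ← circleMap_zero]; exact hbound θ
    _ = ENNReal.ofReal (2 * π * ∑' n, u n) := by
        rw [lintegral_ofReal_re_circleMap_eq hr.1.ne'
          ((differentiableOn_kernelSeries hζ hγ hu hu0).diffContOnCl_ball
            (closedBall_subset_ball hr1))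
          (fun θ => (norm_nonneg _).trans (hbound θ)), kernelSeries_zero, ofReal_re]

theorem le_norm_kernelSeries (hζ : ∀ n, ‖ζ n‖ ≤ 1) (hγ : ∀ n, γ n ∈ Icc 0 1) (hw : Summable w)
    (hw0 : 0 ≤ w) {n : ℕ} {v r θ : ℝ} (hζn : ζ n = exp (-(v * I))) (hr : r ∈ Ioo 0 1)
    (hθ : θ ∈ Ioc v (v + (1 - r))) :
    w n * Real.cos (γ n * (π / 2)) * (2 * (1 - r)) ^ (-γ n) ≤
      ‖kernelSeries ζ γ w (r * exp (θ * I))‖ := by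
  set z : ℂ := r * exp (θ * I)
  have hz : ‖z‖ < 1 := by
    rw [norm_mul, norm_exp_ofReal_mul_I, norm_real, Real.norm_of_nonneg hr.1.le, mul_one]
    exact hr.2
  have hnear : ‖1 - ζ n * z‖ ≤ 2 * (1 - r) := by
    rw [hζn]
    refine (norm_one_sub_exp_mul_le hr.1.le hr.2.le v θ).trans ?_
    rw [abs_of_pos (sub_pos.2 hθ.1)]; linarith [hθ.2]
  have hpos : 0 < ‖1 - ζ n * z‖ := norm_pos_iff.2 (one_sub_mul_ne_zero (hζ n) hz)
  have hγabs : |γ n| ≤ 1 := (abs_of_nonneg (hγ n).1).trans_le (hγ n).2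
  calc w n * Real.cos (γ n * (π / 2)) * (2 * (1 - r)) ^ (-γ n)
      ≤ w n * (Real.cos (γ n * (π / 2)) * ‖powerKernel (ζ n) (γ n) z‖) := by
        rw [mul_assoc, norm_powerKernel]
        exact mul_le_mul_of_nonneg_left (mul_le_mul_of_nonneg_left
          (Real.rpow_le_rpow_of_nonpos hpos hnear (neg_nonpos.2 (hγ n).1))
          (cos_mul_pi_div_two_mem_Icc (hγ n)).1) (hw0 n)
    _ ≤ w n * (powerKernel (ζ n) (γ n) z).re :=
        mul_le_mul_of_nonneg_left (cos_mul_norm_powerKernel_le_re (hζ n) hz hγabs) (hw0 n)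
    _ ≤ (kernelSeries ζ γ w z).re := weight_mul_re_powerKernel_le_re_kernelSeries hζ hγ hw hw0 hz n
    _ ≤ ‖kernelSeries ζ γ w z‖ := re_le_norm _

theorem iSup_hardyArcIntegral_kernelSeries_eq_top (hζ : ∀ n, ‖ζ n‖ ≤ 1)
    (hγ : ∀ n, γ n ∈ Icc 0 1) (hw : Summable w) (hw0 : 0 ≤ w) {n : ℕ} {v a b s : ℝ}
    (hζn : ζ n = exp (-(v * I))) (hγn : γ n < 1) (hwn : 0 < w n) (hs : 1 < γ n * s)
    (hav : a < v) (hvb : v < b) :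
    ⨆ r ∈ Ioo (0 : ℝ) 1, hardyArcIntegral (kernelSeries ζ γ w) s a b r = ⊤ := by
  set A := w n * Real.cos (γ n * (π / 2)) * 2 ^ (-γ n)
  have hA : 0 < A := by
    have := cos_mul_pi_div_two_pos ((abs_of_nonneg (hγ n).1).trans_lt hγn)
    positivity
  have hs0 : 0 < s := by nlinarith [(hγ n).1]
  refine iSup_hardyArcIntegral_eq_top_of_le hav hvb (Real.rpow_pos_of_pos hA s) hs
    fun r hr θ hθ => ?_
  have hr1 : 0 < 1 - r := sub_pos.2 hr.2
  have hnorm : A * (1 - r) ^ (-γ n) ≤ ‖kernelSeries ζ γ w (r * exp (θ * I))‖ := by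
    rw [mul_assoc, ← Real.mul_rpow (by norm_num) hr1.le]
    exact le_norm_kernelSeries hζ hγ hw hw0 hζn hr hθ
  calc A ^ s * (1 - r) ^ (-(γ n * s)) = (A * (1 - r) ^ (-γ n)) ^ s := by
        rw [Real.mul_rpow hA.le (by positivity), ← Real.rpow_mul hr1.le, neg_mul]
    _ ≤ ‖kernelSeries ζ γ w (r * exp (θ * I))‖ ^ s :=
        Real.rpow_le_rpow (mul_pos hA (Real.rpow_pos_of_pos hr1 _)).le hnorm hs0.le

end KernelSeries

theorem exists_ge_ofNat_unpair_snd_eq {α : Type*} [Denumerable α] (a : α) (N : ℕ) :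
    ∃ n ≥ N, Denumerable.ofNat α n.unpair.2 = a :=
  ⟨Nat.pair N (Encodable.encode a), Nat.left_le_pair _ _, by simp⟩

/-- Let `0 < p < ∞`. There is a function `f`, holomorphic on the open
unit disc, which belongs to `H^p` but belongs to no localized Hardy space
`H^q_{[a,b]}(D)` with `p < q < ∞`. -/
theorem exists_in_Hp_not_in_any_localized_Hq (p : ℝ) (hp : 0 < p) :
    ∃ f : ℂ → ℂ,
      DifferentiableOn ℂ f (Metric.ball (0 : ℂ) 1) ∧
      (⨆ r ∈ Ioo (0 : ℝ) 1, hardyArcIntegral f p 0 (2 * π) r) < ⊤ ∧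
      (∀ q : ℝ, p < q → ∀ a b : ℝ, a < b →
        (⨆ r ∈ Ioo (0 : ℝ) 1, hardyArcIntegral f q a b r) = ⊤) := by
  set ζ : ℕ → ℂ := fun n => exp (-(((Denumerable.ofNat ℚ n.unpair.2 : ℚ) : ℝ) * I))
  set γ : ℕ → ℝ := fun n => n / (n + 1)
  set u : ℕ → ℝ := fun n => (1 / 2) ^ n
  have hζ : ∀ n, ‖ζ n‖ ≤ 1 := fun n => by
    simp only [ζ]; rw [← neg_mul, ← ofReal_neg, norm_exp_ofReal_mul_I]
  have hγ1 : ∀ n, γ n < 1 := fun n => (div_lt_one (by positivity)).2 (by linarith)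
  have hγ : ∀ n, γ n ∈ Icc 0 1 := fun n => ⟨by positivity, (hγ1 n).le⟩
  have hu : Summable u := summable_geometric_two
  have hu0 : 0 ≤ u := fun n => by positivity
  have hw := summable_cosWeight hγ hu hu0
  have hw0 := cosWeight_nonneg hγ hu0
  have hwpos : ∀ n, 0 < cosWeight γ u n := fun n =>
    mul_pos (cos_mul_pi_div_two_pos ((abs_of_nonneg (hγ n).1).trans_lt (hγ1 n))) (by positivity)
  refine ⟨fun z => kernelSeries ζ γ (cosWeight γ u) z ^ ((p⁻¹ : ℝ) : ℂ),
    differentiableOn_kernelSeries_cpow hζ hγ hw hw0 (hγ1 0) (hwpos 0) _, ?_,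
    fun q hq a b hab => ?_⟩
  · simp_rw [hardyArcIntegral_cpow_inv, div_self hp.ne']
    refine lt_of_le_of_lt (b := ENNReal.ofReal (2 * π * ∑' n, u n)) (iSup₂_le fun r hr => ?_)
      ENNReal.ofReal_lt_top
    exact hardyArcIntegral_kernelSeries_cosWeight_le hζ hγ hu hu0 hr
  · obtain ⟨v, hav, hvb⟩ := exists_rat_btwn hab
    obtain ⟨N, hN⟩ := eventually_atTop.1 <| (tendsto_natCast_div_add_atTop (1 : ℝ)).eventually
      (lt_mem_nhds ((div_lt_one (hp.trans hq)).2 hq))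
    obtain ⟨n, hnN, hn⟩ := exists_ge_ofNat_unpair_snd_eq v N
    have hs : 1 < γ n * (q / p) := by
      rw [mul_div_assoc', one_lt_div hp, ← div_lt_iff₀ (hp.trans hq)]; exact hN n hnN
    simp_rw [hardyArcIntegral_cpow_inv]
    exact iSup_hardyArcIntegral_kernelSeries_eq_top hζ hγ hw hw0 (by simp only [ζ, hn]) (hγ1 n)
      (hwpos n) hs hav hvb
end
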